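/- arXiv:2107.02919 — 9 statements merged into one kernel-verified Lean document; each statement's English description precedes it below -/
import Mathlib

section
/- For every y ∈ ℝ^d, the energy satisfies E(y) ≥ 0, and E(y) = 0 if and only if Π(y) ∈ 𝒳*. Moreover, for every x* ∈ 𝒳* one has E_{x*}(y) ≥ ‖Π(y) − x*‖₂². -/
open scoped RealInnerProductSpace

noncomputable section

/-- The energy of a dual point `y` with respect to a fixed solution `x*`:
`E_{x*}(y) = ‖x*‖² − ‖Π(y)‖² + 2⟨y, Π(y) − x*⟩`. -/
def Eaux {d : ℕ} (proj : EuclideanSpace ℝ (Fin d) → EuclideanSpace ℝ (Fin d))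
    (xstar y : EuclideanSpace ℝ (Fin d)) : ℝ :=
  ‖xstar‖ ^ 2 - ‖proj y‖ ^ 2 + 2 * ⟪y, proj y - xstar⟫

/-- The energy function `E(y) = inf_{x* ∈ 𝒳*} E_{x*}(y)`. -/
def energy {d : ℕ} (proj : EuclideanSpace ℝ (Fin d) → EuclideanSpace ℝ (Fin d))
    (Xstar : Set (EuclideanSpace ℝ (Fin d))) (y : EuclideanSpace ℝ (Fin d)) : ℝ :=
  ⨅ xs : Xstar, Eaux proj (xs : EuclideanSpace ℝ (Fin d)) y

/-- **Lemma (energy, part 1).** For every `y`, `E(y) ≥ 0`, with `E(y) = 0` iff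
`Π(y) ∈ 𝒳*`; moreover `E_{x*}(y) ≥ ‖Π(y) − x*‖²` for every `x* ∈ 𝒳*`. -/
theorem energy_nonneg_eq_zero_iff
    {d : ℕ} (Xset : Set (EuclideanSpace ℝ (Fin d)))
    (hXc : IsCompact Xset) (hXconv : Convex ℝ Xset) (hXne : Xset.Nonempty)
    (proj : EuclideanSpace ℝ (Fin d) → EuclideanSpace ℝ (Fin d))
    (hprojmem : ∀ y, proj y ∈ Xset)
    (hprojmin : ∀ y, ∀ x ∈ Xset, ‖y - proj y‖ ≤ ‖y - x‖)
    (Xstar : Set (EuclideanSpace ℝ (Fin d)))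
    (hstarsub : Xstar ⊆ Xset) (hstarne : Xstar.Nonempty) (hstarc : IsCompact Xstar) :
    (∀ y, 0 ≤ energy proj Xstar y) ∧
    (∀ y, energy proj Xstar y = 0 ↔ proj y ∈ Xstar) ∧
    (∀ xstar ∈ Xstar, ∀ y, ‖proj y - xstar‖ ^ 2 ≤ Eaux proj xstar y) := by
  -- Projection variational inequality
  have hkey : ∀ y, ∀ x ∈ Xset, ⟪y - proj y, x - proj y⟫ ≤ 0 := by
    intro y x hx
    have hbdd : BddBelow (Set.range fun w : Xset => ‖y - (w : EuclideanSpace ℝ (Fin d))‖) :=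
      ⟨0, by rintro r ⟨w, rfl⟩; exact norm_nonneg _⟩
    have : Nonempty Xset := hXne.to_subtype
    have heq : ‖y - proj y‖ = ⨅ w : Xset, ‖y - (w : EuclideanSpace ℝ (Fin d))‖ := by
      refine le_antisymm (le_ciInf fun w => hprojmin y w w.2) (ciInf_le hbdd ⟨proj y, hprojmem y⟩)
    exact (norm_eq_iInf_iff_real_inner_le_zero hXconv (hprojmem y)).mp heq x hx
  -- Part 3
  have h3 : ∀ xstar ∈ Xstar, ∀ y, ‖proj y - xstar‖ ^ 2 ≤ Eaux proj xstar y := by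
    intro xs hxs y
    have hk := hkey y xs (hstarsub hxs)
    rw [inner_sub_left, inner_sub_right, inner_sub_right, real_inner_self_eq_norm_sq] at hk
    have hc := real_inner_comm (proj y) xs
    have e1 : ‖proj y - xs‖ ^ 2 = ‖proj y‖ ^ 2 - 2 * ⟪proj y, xs⟫ + ‖xs‖ ^ 2 :=
      norm_sub_sq_real _ _
    rw [e1]
    unfold Eaux
    rw [inner_sub_right]
    linarith
  have hbdd0 : ∀ y, BddBelow (Set.range fun xs : Xstar =>
      Eaux proj (xs : EuclideanSpace ℝ (Fin d)) y) := by
    intro y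
    refine ⟨0, ?_⟩
    rintro r ⟨xs, rfl⟩
    exact le_trans (sq_nonneg _) (h3 xs xs.2 y)
  have h1 : ∀ y, 0 ≤ energy proj Xstar y := by
    intro y
    have : Nonempty Xstar := hstarne.to_subtype
    exact le_ciInf fun xs => le_trans (sq_nonneg _) (h3 xs xs.2 y)
  refine ⟨h1, fun y => ?_, h3⟩
  have : Nonempty Xstar := hstarne.to_subtype
  constructor
  · intro h0
    have hcont : Continuous fun xs => Eaux proj xs y := by
      unfold Eaux
      exact (continuous_norm.pow 2).sub continuous_const |>.add
        (continuous_const.mul (continuous_const.inner (continuous_const.sub continuous_id)))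
    obtain ⟨x0, hx0, hmin⟩ := hstarc.exists_isMinOn hstarne hcont.continuousOn
    have hle : energy proj Xstar y ≤ Eaux proj x0 y := ciInf_le (hbdd0 y) ⟨x0, hx0⟩
    have hge : Eaux proj x0 y ≤ energy proj Xstar y := le_ciInf fun xs => hmin xs.2
    have heq : Eaux proj x0 y = 0 := le_antisymm (h0 ▸ hge) (h0 ▸ hle)
    have hsq : ‖proj y - x0‖ ^ 2 ≤ 0 := heq ▸ h3 x0 hx0 y
    have : proj y - x0 = 0 := by
      have := le_antisymm hsq (sq_nonneg _)
      have hn : ‖proj y - x0‖ = 0 := by nlinarith [norm_nonneg (proj y - x0)]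
      exact norm_eq_zero.mp hn
    have : proj y = x0 := by rwa [sub_eq_zero] at this
    rwa [this]
  · intro hp
    have hzero : Eaux proj (proj y) y = 0 := by
      simp [Eaux]
    have hle : energy proj Xstar y ≤ 0 := by
      have := ciInf_le (hbdd0 y) (⟨proj y, hp⟩ : Xstar)
      rwa [hzero] at this
    exact le_antisymm hle (h1 y)

end
end

section
/- Let (y_n)_{n≥1} be a sequence in ℝ^d. If lim_{n→∞} E(y_n) = 0, then Π(y_n) converges to the set 𝒳*, i.e., dist(Π(y_n), 𝒳*) → 0 as n → ∞ (where dist(z, 𝒳*) = inf_{x*∈𝒳*} ‖z − x*‖₂). -/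
open scoped RealInnerProductSpace

noncomputable section

/-- **Lemma (energy, part 2).** If `E(yₙ) → 0` along a sequence `(yₙ)`, then
`Π(yₙ)` converges to the set `𝒳*`: `dist(Π(yₙ), 𝒳*) → 0`. -/
theorem energy_tendsto_zero_proj_tendsto
    {d : ℕ} (Xset : Set (EuclideanSpace ℝ (Fin d)))
    (hXc : IsCompact Xset) (hXconv : Convex ℝ Xset) (hXne : Xset.Nonempty)
    (proj : EuclideanSpace ℝ (Fin d) → EuclideanSpace ℝ (Fin d))
    (hprojmem : ∀ y, proj y ∈ Xset)
    (hprojmin : ∀ y, ∀ x ∈ Xset, ‖y - proj y‖ ≤ ‖y - x‖)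
    (Xstar : Set (EuclideanSpace ℝ (Fin d)))
    (hstarsub : Xstar ⊆ Xset) (hstarne : Xstar.Nonempty) (hstarc : IsCompact Xstar)
    (y : ℕ → EuclideanSpace ℝ (Fin d))
    (hE : Filter.Tendsto (fun n => energy proj Xstar (y n)) Filter.atTop (nhds 0)) :
    Filter.Tendsto (fun n => Metric.infDist (proj (y n)) Xstar) Filter.atTop (nhds 0) := by
  obtain ⟨x0, hx0⟩ := hstarne
  have hne : Nonempty Xstar := ⟨⟨x0, hx0⟩⟩
  have hneX : Nonempty Xset := ⟨⟨x0, hstarsub hx0⟩⟩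
  -- projection characterization
  have hproj : ∀ z x, x ∈ Xset → ⟪z - proj z, x - proj z⟫ ≤ 0 := by
    intro z x hx
    have heq : ‖z - proj z‖ = ⨅ w : Xset, ‖z - w‖ := by
      apply le_antisymm
      · exact le_ciInf fun w => hprojmin z w w.2
      · exact ciInf_le ⟨0, by rintro _ ⟨w, rfl⟩; positivity⟩
          (⟨proj z, hprojmem z⟩ : Xset)
    exact (norm_eq_iInf_iff_real_inner_le_zero hXconv (hprojmem z)).1 heq x hx
  have hkey : ∀ n, Metric.infDist (proj (y n)) Xstar ^ 2 ≤ energy proj Xstar (y n) := by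
    intro n
    apply le_ciInf
    intro xs
    have h1 : Metric.infDist (proj (y n)) Xstar ≤ ‖proj (y n) - (xs : EuclideanSpace ℝ (Fin d))‖ := by
      have := Metric.infDist_le_dist_of_mem (x := proj (y n)) xs.2
      rwa [dist_eq_norm] at this
    have hip := hproj (y n) xs (hstarsub xs.2)
    have h2 : ‖proj (y n) - (xs : EuclideanSpace ℝ (Fin d))‖ ^ 2
        ≤ Eaux proj (xs : EuclideanSpace ℝ (Fin d)) (y n) := by
      have expand : Eaux proj (xs : EuclideanSpace ℝ (Fin d)) (y n)
          = ‖proj (y n) - (xs : EuclideanSpace ℝ (Fin d))‖ ^ 2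
            - 2 * ⟪y n - proj (y n), (xs : EuclideanSpace ℝ (Fin d)) - proj (y n)⟫ := by
        simp only [Eaux, norm_sub_sq_real, inner_sub_left, inner_sub_right,
          real_inner_self_eq_norm_sq]
        ring_nf
      rw [expand]
      linarith
    calc Metric.infDist (proj (y n)) Xstar ^ 2
        ≤ ‖proj (y n) - (xs : EuclideanSpace ℝ (Fin d))‖ ^ 2 := by
          apply pow_le_pow_left₀ Metric.infDist_nonneg h1
      _ ≤ _ := h2
  have hsq : Filter.Tendsto (fun n => Metric.infDist (proj (y n)) Xstar ^ 2)
      Filter.atTop (nhds 0) :=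
    squeeze_zero (fun n => sq_nonneg _) hkey hE
  have hcomp := (Real.continuous_sqrt.tendsto 0).comp hsq
  simp only [Real.sqrt_zero, Function.comp_def] at hcomp
  have : (fun n => Real.sqrt (Metric.infDist (proj (y n)) Xstar ^ 2))
      = fun n => Metric.infDist (proj (y n)) Xstar := by
    funext n
    exact Real.sqrt_sq Metric.infDist_nonneg
  rwa [this] at hcomp

end
end

section
/- For any x* ∈ 𝒳* and any y, Δy ∈ ℝ^d, the one-step perturbation of the energy satisfies E_{x*}(y + Δy) − E_{x*}(y) ≤ 2⟨Δy, Π(y) − x*⟩ + ‖Δy‖₂². -/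
open scoped RealInnerProductSpace

noncomputable section

set_option maxHeartbeats 2000000 in
/-- **Lemma (one-step energy perturbation).** For any `x* ∈ 𝒳*` and any
`y, Δy ∈ ℝ^d`, `E_{x*}(y + Δy) − E_{x*}(y) ≤ 2⟨Δy, Π(y) − x*⟩ + ‖Δy‖²`. -/
theorem energy_perturbation_bound
    {d : ℕ} (Xset : Set (EuclideanSpace ℝ (Fin d)))
    (hXc : IsCompact Xset) (hXconv : Convex ℝ Xset) (hXne : Xset.Nonempty)
    (proj : EuclideanSpace ℝ (Fin d) → EuclideanSpace ℝ (Fin d))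
    (hprojmem : ∀ y, proj y ∈ Xset)
    (hprojmin : ∀ y, ∀ x ∈ Xset, ‖y - proj y‖ ≤ ‖y - x‖)
    (Xstar : Set (EuclideanSpace ℝ (Fin d)))
    (hstarsub : Xstar ⊆ Xset) (hstarne : Xstar.Nonempty) (hstarc : IsCompact Xstar)
    (xstar : EuclideanSpace ℝ (Fin d)) (hxstar : xstar ∈ Xstar)
    (y Δy : EuclideanSpace ℝ (Fin d)) :
    Eaux proj xstar (y + Δy) - Eaux proj xstar y ≤
      2 * ⟪Δy, proj y - xstar⟫ + ‖Δy‖ ^ 2 := by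
  have : Nonempty Xset := ⟨⟨proj y, hprojmem y⟩⟩
  have hbdd : BddBelow (Set.range fun w : Xset => ‖y - (w : EuclideanSpace ℝ (Fin d))‖) := by
    refine ⟨0, ?_⟩
    rintro a ⟨w, rfl⟩
    exact norm_nonneg _
  have hinf : ‖y - proj y‖ = ⨅ w : Xset, ‖y - w‖ := by
    apply le_antisymm
    · exact le_ciInf fun w => hprojmin y w w.2
    · exact ciInf_le hbdd ⟨proj y, hprojmem y⟩
  have hVI : ⟪y - proj y, proj (y + Δy) - proj y⟫ ≤ 0 :=
    (norm_eq_iInf_iff_real_inner_le_zero hXconv (hprojmem y)).mp hinf _ (hprojmem (y + Δy))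
  have hsq : 0 ≤ ‖Δy - (proj (y + Δy) - proj y)‖ ^ 2 := sq_nonneg _
  rw [norm_sub_sq_real, norm_sub_sq_real] at hsq
  rw [inner_sub_right, inner_sub_left, inner_sub_left] at hVI
  simp only [Eaux, inner_sub_right, inner_add_left, inner_sub_left,
    real_inner_comm (proj y) (proj (y + Δy))] at *
  linarith [real_inner_self_eq_norm_sq (proj y)]

end
end

section
/- Under the constrained deterministic setup with variational coherence, the reciprocity assumption, and the delay/step-size assumption, the DAGD iterates admit a subsequence converging to the solution set: there exist indices n_1 < n_2 < ⋯ with dist(x_{n_k}, 𝒳*) → 0 as k → ∞ (equivalently, liminf_{n→∞} dist(x_n, 𝒳*) = 0). -/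
open scoped RealInnerProductSpace

noncomputable section

/-- Delay/step-size assumption (Assumption 2 of the paper):
(i) bounded delays with square-summable, non-summable step-sizes;
(ii) sublinearly growing delays with `α n = 1/n`;
(iii) linearly growing delays with `α n = 1/(n log n)`;
(iv) polynomially growing delays with `α n = 1/(n log n · log log n)`. -/
def DelayStep (s : ℕ → ℕ) (α : ℕ → ℝ) : Prop :=
  (∃ D : ℕ, (∀ n, n - s n ≤ D) ∧ Summable (fun n => (α n) ^ 2) ∧ ¬ Summable α) ∨
  (∃ K : ℝ, 0 < K ∧ ∃ p : ℝ, 0 < p ∧ p < 1 ∧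
    (∀ n : ℕ, (n : ℝ) - (s n : ℝ) ≤ K * (s n : ℝ) ^ p) ∧
    (∀ n : ℕ, 1 ≤ n → α n = 1 / n)) ∨
  (∃ K : ℝ, 0 < K ∧ (∀ n : ℕ, (n : ℝ) - (s n : ℝ) ≤ K * (s n : ℝ)) ∧
    (∀ n : ℕ, 2 ≤ n → α n = 1 / (n * Real.log n))) ∨
  (∃ K : ℝ, 0 < K ∧ ∃ q : ℝ, 1 ≤ q ∧
    (∀ n : ℕ, (n : ℝ) - (s n : ℝ) ≤ K * (s n : ℝ) ^ q) ∧
    (∀ n : ℕ, 3 ≤ n → α n = 1 / (n * Real.log n * Real.log (Real.log n))))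

open Finset Filter Real

section Helpers


lemma helper_sum_telescope {M : Type*} [AddCommGroup M] (g : ℕ → M) {a b : ℕ} (h : a ≤ b) :
    ∑ k ∈ Finset.Ico a b, (g (k+1) - g k) = g b - g a := by
  rw [Finset.sum_Ico_eq_sub _ h, Finset.sum_range_sub, Finset.sum_range_sub]
  abel

lemma helper_summable_of_le_sub {f t : ℕ → ℝ} (hf : ∀ n, 0 ≤ f n) (ht0 : ∀ n, 0 ≤ t n)
    (h : ∀ n, f n ≤ t n - t (n+1)) : Summable f := by
  refine summable_of_sum_range_le hf (c := t 0) fun n => ?_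
  calc ∑ i ∈ range n, f i ≤ ∑ i ∈ range n, (t i - t (i+1)) :=
        Finset.sum_le_sum fun i _ => h i
    _ = t 0 - t n := Finset.sum_range_sub' t n
    _ ≤ t 0 := by linarith [ht0 n]

lemma helper_summable_of_eventually_le {f g : ℕ → ℝ} (N : ℕ) (hf : ∀ n, 0 ≤ f n)
    (hg : Summable g) (h : ∀ n, N ≤ n → f n ≤ g n) : Summable f := by
  rw [← summable_nat_add_iff N]
  exact Summable.of_nonneg_of_le (fun n => hf _) (fun n => h _ (Nat.le_add_left _ _))
    ((summable_nat_add_iff N).2 hg)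

lemma helper_summable_of_eventually_le_sub {f t : ℕ → ℝ} (N : ℕ) (hf : ∀ n, 0 ≤ f n)
    (ht0 : ∀ n, N ≤ n → 0 ≤ t n) (h : ∀ n, N ≤ n → f n ≤ t n - t (n+1)) : Summable f := by
  rw [← summable_nat_add_iff N]
  refine helper_summable_of_le_sub (t := fun n => t (n + N)) (fun n => hf _)
    (fun n => ht0 _ (Nat.le_add_left _ _)) (fun n => ?_)
  have := h (n + N) (Nat.le_add_left _ _)
  simpa [Nat.add_right_comm n N 1] using this

lemma helper_not_summable {f t : ℕ → ℝ} (N : ℕ) (C : ℝ) (hC : 0 < C)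
    (hf : ∀ n, 0 ≤ f n) (h : ∀ n, N ≤ n → t (n+1) - t n ≤ C * f n)
    (ht : Tendsto t atTop atTop) : ¬ Summable f := by
  intro hsum
  have hsum' : Summable fun i => f (N + i) := by
    have := (summable_nat_add_iff N).2 hsum
    simpa [Nat.add_comm] using this
  set T := ∑' i, f (N + i) with hT
  have hmain : ∀ m, t (N + m) ≤ t N + C * ∑ i ∈ range m, f (N + i) := by
    intro m
    induction m with
    | zero => simp
    | succ m ih =>
      have h1 := h (N + m) (Nat.le_add_right _ _)
      rw [Finset.sum_range_succ, mul_add]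
      have : t (N + (m+1)) = t ((N + m) + 1) := by ring_nf
      rw [this]
      linarith
  have hb : ∀ m, ∑ i ∈ range m, f (N + i) ≤ T :=
    fun m => Summable.sum_le_tsum _ (fun i _ => hf _) hsum'
  rcases eventually_atTop.1 (tendsto_atTop.1 ht (t N + C * T + 1)) with ⟨M, hM⟩
  have h1 := hM (N + M) (Nat.le_add_left _ _)
  have h2 := hmain M
  have h3 := hb M
  have h4 : C * ∑ i ∈ range M, f (N + i) ≤ C * T := by
    exact mul_le_mul_of_nonneg_left h3 hC.le
  linarith

-- log (x+1) ≤ 2 log x for x ≥ 2 (reals)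
lemma helper_log_succ_le {x : ℝ} (hx : 2 ≤ x) : Real.log (x + 1) ≤ 2 * Real.log x := by
  have h1 : Real.log (x + 1) ≤ Real.log (x ^ 2) := by
    apply Real.log_le_log (by linarith)
    nlinarith
  rw [Real.log_pow] at h1
  push_cast at h1
  linarith

-- log (x+1) - log x ≥ 1/(x+1) for x ≥ 1
lemma helper_log_diff_ge {x : ℝ} (hx : 0 < x) : 1 / (x + 1) ≤ Real.log (x + 1) - Real.log x := by
  have h := Real.log_le_sub_one_of_pos (x := x / (x + 1)) (by positivity)
  rw [Real.log_div (ne_of_gt hx) (by positivity)] at h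
  have : x / (x + 1) - 1 = -(1/(x+1)) := by field_simp; ring
  rw [this] at h
  linarith

-- log (x+1) - log x ≤ 1/x for x ≥ 1
lemma helper_log_diff_le {x : ℝ} (hx : 0 < x) : Real.log (x + 1) - Real.log x ≤ 1 / x := by
  have h := Real.log_le_sub_one_of_pos (x := (x + 1) / x) (by positivity)
  rw [Real.log_div (by positivity) (ne_of_gt hx)] at h
  have : (x + 1) / x - 1 = 1/x := by field_simp; ring
  rw [this] at h
  linarith

-- 1 ≤ log x for x ≥ 3
lemma helper_one_le_log {x : ℝ} (hx : 3 ≤ x) : 1 ≤ Real.log x := by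
  rw [Real.le_log_iff_exp_le (by linarith)]
  calc Real.exp 1 ≤ 2.7182818286 := (Real.exp_one_lt_d9).le
    _ ≤ 3 := by norm_num
    _ ≤ x := hx

-- generic: log x − log y ≥ (x − y)/x ≥ stuff; in form: log x - log y ≥ 1 - y/x
lemma helper_log_sub_ge {x y : ℝ} (hy : 0 < y) (hxy : y ≤ x) :
    1 - y / x ≤ Real.log x - Real.log y := by
  have hx : 0 < x := lt_of_lt_of_le hy hxy
  have h := Real.log_le_sub_one_of_pos (x := y / x) (by positivity)
  rw [Real.log_div (ne_of_gt hy) (ne_of_gt hx)] at h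
  linarith

lemma helper_log_sub_le {x y : ℝ} (hy : 0 < y) (hxy : y ≤ x) :
    Real.log x - Real.log y ≤ x / y - 1 := by
  have hx : 0 < x := lt_of_lt_of_le hy hxy
  have h := Real.log_le_sub_one_of_pos (x := x / y) (by positivity)
  rw [Real.log_div (ne_of_gt hx) (ne_of_gt hy)] at h
  linarith

lemma helper_sum_image_le (f : ℕ → ℕ) (g : ℕ → ℝ) (s : Finset ℕ) (h : ∀ n, 0 ≤ g n) :
    ∑ k ∈ s.image f, g k ≤ ∑ i ∈ s, g (f i) := by
  induction s using Finset.induction with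
  | empty => simp
  | @insert a s ha ih =>
    rw [Finset.image_insert, Finset.sum_insert ha]
    have hle : ∑ k ∈ insert (f a) (s.image f), g k ≤ g (f a) + ∑ k ∈ s.image f, g k := by
      by_cases hb : f a ∈ s.image f
      · rw [Finset.insert_eq_self.2 hb]
        have := h (f a)
        linarith
      · rw [Finset.sum_insert hb]
    linarith

lemma helper_s_tendsto {s : ℕ → ℕ} {K r : ℝ} (hK : 0 < K) (hr : 0 ≤ r)
    (h : ∀ n : ℕ, (n:ℝ) - (s n : ℝ) ≤ K * (s n:ℝ) ^ r) : Tendsto s atTop atTop := by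
  rw [tendsto_atTop]
  intro M
  obtain ⟨N, hN⟩ := exists_nat_gt ((M:ℝ) + K * (M:ℝ)^r)
  rw [eventually_atTop]
  refine ⟨N, fun n hn => ?_⟩
  by_contra hcon
  push_neg at hcon
  have h1 : (s n : ℝ) ≤ M := by exact_mod_cast hcon.le
  have h2 : (s n:ℝ)^r ≤ (M:ℝ)^r := Real.rpow_le_rpow (Nat.cast_nonneg _) h1 hr
  have h3 := h n
  have h4 : (N:ℝ) ≤ (n:ℝ) := Nat.cast_le.2 hn
  nlinarith

lemma helper_s_tendsto_nat {s : ℕ → ℕ} (D : ℕ) (h : ∀ n, n - s n ≤ D) :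
    Tendsto s atTop atTop := by
  rw [tendsto_atTop]
  intro M
  rw [eventually_atTop]
  exact ⟨M + D, fun n hn => by have := h n; omega⟩

lemma helper_case1_W {s : ℕ → ℕ} {α : ℕ → ℝ} (hα : ∀ n, 0 < α n) (hs : ∀ n, s n ≤ n)
    (D : ℕ) (hD : ∀ n, n - s n ≤ D) (hsq : Summable (fun n => (α n)^2)) :
    Summable (fun n => α (n+1) * ∑ k ∈ Finset.Ico (s n) (n+1), α (k+1)) := by
  have hsq1 : Summable (fun n => (α (n+1))^2) := (summable_nat_add_iff 1).2 hsq
  -- the comparison function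
  set g : ℕ → ℝ := fun n => (D+1) * (α (n+1))^2 / 2
    + (1/2) * ∑ i ∈ range (D+1), (α (n - i + 1))^2 with hgdef
  have hgsum : Summable g := by
    apply Summable.add
    · exact (hsq1.mul_left _).div_const 2
    · apply Summable.mul_left
      apply summable_sum
      intro i _
      have : Summable (fun n => (α (n + i - i + 1))^2) := by
        simpa using hsq1
      exact (summable_nat_add_iff i).1 this
  refine Summable.of_nonneg_of_le (fun n => ?_) (fun n => ?_) hgsum
  · exact mul_nonneg (hα _).le (Finset.sum_nonneg fun k _ => (hα _).le)
  · rw [Finset.mul_sum]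
    have hsub : Finset.Ico (s n) (n+1) ⊆ (range (D+1)).image (fun i => n - i) := by
      intro k hk
      rw [Finset.mem_Ico] at hk
      rw [Finset.mem_image]
      refine ⟨n - k, ?_, ?_⟩
      · rw [Finset.mem_range]
        have := hD n
        omega
      · omega
    calc ∑ k ∈ Finset.Ico (s n) (n+1), α (n+1) * α (k+1)
        ≤ ∑ k ∈ Finset.Ico (s n) (n+1), ((α (n+1))^2 + (α (k+1))^2)/2 := by
          refine Finset.sum_le_sum fun k _ => ?_
          nlinarith [sq_nonneg (α (n+1) - α (k+1))]
      _ = (Finset.Ico (s n) (n+1)).card * (α (n+1))^2/2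
          + (1/2) * ∑ k ∈ Finset.Ico (s n) (n+1), (α (k+1))^2 := by
          simp only [add_div]
          rw [Finset.sum_add_distrib, Finset.sum_const, ← Finset.sum_div]
          push_cast
          ring
      _ ≤ g n := by
          rw [hgdef]
          simp only
          have hcard : ((Finset.Ico (s n) (n+1)).card : ℝ) ≤ (D:ℝ) + 1 := by
            rw [Nat.card_Ico]
            have := hD n
            have : n + 1 - s n ≤ D + 1 := by omega
            exact_mod_cast this
          have hsum2 : ∑ k ∈ Finset.Ico (s n) (n+1), (α (k+1))^2
              ≤ ∑ i ∈ range (D+1), (α (n - i + 1))^2 := by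
            calc ∑ k ∈ Finset.Ico (s n) (n+1), (α (k+1))^2
                ≤ ∑ k ∈ (range (D+1)).image (fun i => n - i), (α (k+1))^2 :=
                  Finset.sum_le_sum_of_subset_of_nonneg hsub fun k _ _ => sq_nonneg _
              _ ≤ ∑ i ∈ range (D+1), (α (n - i + 1))^2 :=
                  helper_sum_image_le _ _ _ fun k => sq_nonneg _
          have h1 : 0 ≤ (α (n+1))^2 := sq_nonneg _
          nlinarith

-- divergence of α when α n = 1/n for n ≥ 1
lemma helper_case2_div {α : ℕ → ℝ} (hform : ∀ n : ℕ, 1 ≤ n → α n = 1 / n) :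
    ¬ Summable α := by
  intro h
  have h1 : Summable (fun n : ℕ => α (n+1)) := (summable_nat_add_iff 1).2 h
  have h2 : Summable (fun n : ℕ => 1 / ((n:ℝ)+1)) := by
    refine h1.congr fun n => ?_
    rw [hform (n+1) (by omega)]
    push_cast
    ring
  have h3 : Summable (fun n : ℕ => 1 / (n:ℝ)) := by
    rw [← summable_nat_add_iff 1]
    refine h2.congr fun n => ?_
    push_cast
    ring
  exact Real.not_summable_one_div_natCast h3

lemma helper_case2_W {s : ℕ → ℕ} {α : ℕ → ℝ} (hα : ∀ n, 0 < α n) (hs : ∀ n, s n ≤ n)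
    {K p : ℝ} (hK : 0 < K) (hp0 : 0 < p) (hp1 : p < 1)
    (hd : ∀ n : ℕ, (n:ℝ) - (s n : ℝ) ≤ K * (s n:ℝ)^p)
    (hform : ∀ n : ℕ, 1 ≤ n → α n = 1 / n) :
    Summable (fun n => α (n+1) * ∑ k ∈ Finset.Ico (s n) (n+1), α (k+1)) := by
  have hsum : Summable (fun n : ℕ => (K+1)^2 * (n:ℝ)^(p-2)) :=
    (Real.summable_nat_rpow.2 (by linarith)).mul_left _
  refine helper_summable_of_eventually_le 1 (fun n => ?_) hsum (fun n hn => ?_)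
  · exact mul_nonneg (hα _).le (Finset.sum_nonneg fun k _ => (hα _).le)
  · have hn1 : (1:ℝ) ≤ (n:ℝ) := by exact_mod_cast hn
    have hnpos : (0:ℝ) < n := by linarith
    have hs1 : 1 ≤ s n := by
      rcases Nat.eq_zero_or_pos (s n) with h0 | h1
      · exfalso
        have h2 := hd n
        rw [h0] at h2
        norm_num [Real.zero_rpow (ne_of_gt hp0)] at h2
        linarith
      · exact h1
    have hs1R : (1:ℝ) ≤ (s n : ℝ) := by exact_mod_cast hs1
    have hspos : (0:ℝ) < (s n : ℝ) := by linarith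
    have hsp : ((s n:ℝ))^p ≤ (s n:ℝ) := by
      have h2 := Real.rpow_le_rpow_of_exponent_le hs1R hp1.le
      rwa [Real.rpow_one] at h2
    have hnK : (n:ℝ) ≤ (K+1) * (s n:ℝ) := by nlinarith [hd n]
    have hsnR : (s n : ℝ) ≤ (n:ℝ) := by exact_mod_cast hs n
    set B := (n:ℝ)^p with hBdef
    set Q := (n:ℝ)^(p-2) with hQdef
    have hsnp : ((s n:ℝ))^p ≤ B := Real.rpow_le_rpow hspos.le hsnR hp0.le
    have hnp1 : (1:ℝ) ≤ B := Real.one_le_rpow hn1 hp0.le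
    have hB : Q * (n:ℝ)^2 = B := by
      rw [hQdef, hBdef, show ((n:ℝ)^2 : ℝ) = (n:ℝ)^((2:ℕ):ℝ) by rw [Real.rpow_natCast],
        ← Real.rpow_add hnpos]
      norm_num
    set A := ∑ k ∈ Finset.Ico (s n) (n+1), α (k+1) with hAdef
    have hAnn : 0 ≤ A := Finset.sum_nonneg fun k _ => (hα _).le
    have hsumle : A ≤ ((n:ℝ)+1 - s n) * (1/((s n:ℝ)+1)) := by
      have hcard : (Finset.Ico (s n) (n+1)).card = n + 1 - s n := Nat.card_Ico _ _
      have hterm : ∀ k ∈ Finset.Ico (s n) (n+1), α (k+1) ≤ 1/((s n:ℝ)+1) := by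
        intro k hk
        rw [Finset.mem_Ico] at hk
        rw [hform (k+1) (by omega)]
        have h1 : (s n:ℝ) ≤ (k:ℝ) := by exact_mod_cast hk.1
        push_cast
        apply one_div_le_one_div_of_le (by positivity) (by linarith)
      calc A ≤ (Finset.Ico (s n) (n+1)).card • (1/((s n:ℝ)+1)) :=
            Finset.sum_le_card_nsmul _ _ _ hterm
        _ = ((n + 1 - s n : ℕ):ℝ) * (1/((s n:ℝ)+1)) := by rw [hcard, nsmul_eq_mul]
        _ = ((n:ℝ)+1 - s n) * (1/((s n:ℝ)+1)) := by
            rw [Nat.cast_sub (by have := hs n; omega)]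
            push_cast
            ring
    have hstep1 : ((n:ℝ)+1-s n) ≤ K * B + 1 := by nlinarith [hd n]
    have hstep2 : (1:ℝ)/((s n:ℝ)+1) ≤ (K+1)/(n:ℝ) := by
      rw [div_le_div_iff₀ (by positivity) hnpos]
      nlinarith
    have hA2 : A ≤ (K * B + 1) * ((K+1)/(n:ℝ)) :=
      le_trans hsumle (mul_le_mul hstep1 hstep2 (by positivity) (by nlinarith))
    rw [hform (n+1) (by omega)]
    push_cast
    have hgoal2 : (1/((n:ℝ)+1)) * A ≤ (1/(n:ℝ)) * ((K*B+1) * ((K+1)/(n:ℝ))) := by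
      apply mul_le_mul (one_div_le_one_div_of_le hnpos (by linarith)) hA2 hAnn (by positivity)
    have heq : (1/(n:ℝ)) * ((K*B+1) * ((K+1)/(n:ℝ))) = ((K*B+1)*(K+1)) / ((n:ℝ)^2) := by
      field_simp
    have hkey : ((K*B+1)*(K+1)) / ((n:ℝ)^2) ≤ ((K+1)^2 * B) / ((n:ℝ)^2) := by
      apply (div_le_div_iff_of_pos_right (by positivity)).2
      nlinarith [mul_nonneg (by linarith : (0:ℝ) ≤ K+1) (by linarith : (0:ℝ) ≤ B - 1)]
    have heq2 : ((K+1)^2 * B)/((n:ℝ)^2) = (K+1)^2 * Q := by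
      rw [← hB]
      field_simp
    calc (1/((n:ℝ)+1)) * A ≤ ((K*B+1)*(K+1)) / ((n:ℝ)^2) := by rw [← heq]; exact hgoal2
      _ ≤ ((K+1)^2 * B) / ((n:ℝ)^2) := hkey
      _ = (K+1)^2 * Q := heq2

lemma helper_loglog_tendsto :
    Tendsto (fun n : ℕ => Real.log (Real.log (n:ℝ))) atTop atTop :=
  Real.tendsto_log_atTop.comp (Real.tendsto_log_atTop.comp tendsto_natCast_atTop_atTop)

lemma helper_case3_div {α : ℕ → ℝ} (hα : ∀ n, 0 < α n)
    (hform : ∀ n : ℕ, 2 ≤ n → α n = 1 / (n * Real.log n)) :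
    ¬ Summable α := by
  intro h
  refine helper_not_summable (f := fun n => α (n+1))
    (t := fun n : ℕ => Real.log (Real.log (n:ℝ))) 3 4 (by norm_num)
    (fun n => (hα _).le) (fun n hn => ?_) helper_loglog_tendsto
    ((summable_nat_add_iff 1).2 h)
  have hn3 : (3:ℝ) ≤ (n:ℝ) := by exact_mod_cast hn
  have hnpos : (0:ℝ) < n := by linarith
  have hln : 1 ≤ Real.log n := helper_one_le_log hn3
  have hlnpos : 0 < Real.log n := by linarith
  have hmono : Real.log (n:ℝ) ≤ Real.log ((n:ℝ)+1) := Real.log_le_log hnpos (by linarith)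
  have h1 : Real.log (Real.log ((n:ℝ)+1)) - Real.log (Real.log (n:ℝ))
      ≤ Real.log ((n:ℝ)+1) / Real.log (n:ℝ) - 1 := helper_log_sub_le hlnpos hmono
  have h2 : Real.log ((n:ℝ)+1) - Real.log (n:ℝ) ≤ 1 / (n:ℝ) := helper_log_diff_le hnpos
  have h3 : Real.log ((n:ℝ)+1) ≤ 2 * Real.log (n:ℝ) := helper_log_succ_le (by linarith)
  have hform1 : α (n+1) = 1 / (((n:ℝ)+1) * Real.log ((n:ℝ)+1)) := by
    rw [hform (n+1) (by omega)]
    push_cast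
    ring_nf
  have hln1pos : 0 < Real.log ((n:ℝ)+1) := by linarith
  -- t(n+1) - t n ≤ (log(n+1) - log n)/log n ≤ 1/(n log n) ≤ 4/((n+1) log(n+1))
  have key : Real.log ((n:ℝ)+1) / Real.log (n:ℝ) - 1
      = (Real.log ((n:ℝ)+1) - Real.log (n:ℝ)) / Real.log (n:ℝ) := by
    field_simp
  have h4 : (Real.log ((n:ℝ)+1) - Real.log (n:ℝ)) / Real.log (n:ℝ)
      ≤ (1/(n:ℝ)) / Real.log (n:ℝ) := (div_le_div_iff_of_pos_right hlnpos).2 h2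
  have h5 : (1/(n:ℝ)) / Real.log (n:ℝ) ≤ 4 * (1 / (((n:ℝ)+1) * Real.log ((n:ℝ)+1))) := by
    rw [div_div, mul_one_div]
    rw [div_le_div_iff₀ (by positivity) (by positivity)]
    nlinarith
  have hcast : ((n+1 : ℕ):ℝ) = (n:ℝ)+1 := by push_cast; ring
  show Real.log (Real.log (((n+1:ℕ)):ℝ)) - Real.log (Real.log ((n:ℝ))) ≤ 4 * α (n+1)
  rw [hcast, hform1]
  linarith

set_option maxHeartbeats 1000000 in
lemma helper_case3_W {s : ℕ → ℕ} {α : ℕ → ℝ} (hα : ∀ n, 0 < α n) (hs : ∀ n, s n ≤ n)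
    {K : ℝ} (hK : 0 < K)
    (hd : ∀ n : ℕ, (n:ℝ) - (s n : ℝ) ≤ K * (s n:ℝ))
    (hform : ∀ n : ℕ, 2 ≤ n → α n = 1 / (n * Real.log n)) :
    Summable (fun n => α (n+1) * ∑ k ∈ Finset.Ico (s n) (n+1), α (k+1)) := by
  obtain ⟨N₀, hN₀⟩ := exists_nat_gt ((K+1)^2 + 2*(K+1) + 9)
  refine helper_summable_of_eventually_le_sub (t := fun m : ℕ => 8*(K+1)/Real.log (m:ℝ))
    (max N₀ 3) (fun n => mul_nonneg (hα _).le (Finset.sum_nonneg fun k _ => (hα _).le))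
    (fun n hn => by positivity) (fun n hn => ?_)
  have hnN₀ : N₀ ≤ n := le_trans (le_max_left _ _) hn
  have hn3 : 3 ≤ n := le_trans (le_max_right _ _) hn
  have hn3R : (3:ℝ) ≤ (n:ℝ) := by exact_mod_cast hn3
  have hnR : ((K+1)^2 + 2*(K+1) + 9) ≤ (n:ℝ) := le_trans hN₀.le (by exact_mod_cast hnN₀)
  have hnpos : (0:ℝ) < n := by linarith
  have hK1 : (0:ℝ) < K + 1 := by linarith
  -- basic log facts at n
  have hln : 1 ≤ Real.log (n:ℝ) := helper_one_le_log hn3R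
  have hlnpos : 0 < Real.log (n:ℝ) := by linarith
  have hmono : Real.log (n:ℝ) ≤ Real.log ((n:ℝ)+1) := Real.log_le_log hnpos (by linarith)
  have h3 : Real.log ((n:ℝ)+1) ≤ 2 * Real.log (n:ℝ) := helper_log_succ_le (by linarith)
  have hdiff : 1/((n:ℝ)+1) ≤ Real.log ((n:ℝ)+1) - Real.log (n:ℝ) := helper_log_diff_ge hnpos
  -- s n bounds
  have hnK : (n:ℝ) ≤ (K+1) * (s n : ℝ) := by nlinarith [hd n]
  have hsR : (n:ℝ)/(K+1) ≤ (s n:ℝ) := by rw [div_le_iff₀ hK1]; nlinarith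
  have hs2 : (2:ℝ) ≤ (s n : ℝ) := by
    have : 2*(K+1) ≤ (n:ℝ) := by nlinarith
    have := hsR
    rw [div_le_iff₀ hK1] at this
    nlinarith
  have hs2n : 2 ≤ s n := by exact_mod_cast hs2
  have hspos : (0:ℝ) < (s n : ℝ) := by linarith
  -- log(s n + 1) ≥ (1/2) log n
  have hlogs : (1/2) * Real.log (n:ℝ) ≤ Real.log ((s n:ℝ)+1) := by
    have h1 : Real.log ((n:ℝ)/(K+1)) ≤ Real.log ((s n:ℝ)+1) :=
      Real.log_le_log (by positivity) (by linarith)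
    rw [Real.log_div (ne_of_gt hnpos) (ne_of_gt hK1)] at h1
    have h2 : Real.log (K+1) ≤ (1/2) * Real.log (n:ℝ) := by
      have h4 : (K+1)^2 ≤ (n:ℝ) := by nlinarith
      have h5 : Real.log ((K+1)^2) ≤ Real.log (n:ℝ) := Real.log_le_log (by positivity) h4
      rw [Real.log_pow] at h5
      push_cast at h5
      linarith
    linarith
  have hlogs1 : 1 ≤ Real.log ((s n:ℝ)+1) := helper_one_le_log (by linarith)
  have hlogspos : 0 < Real.log ((s n:ℝ)+1) := by linarith
  -- bound the inner sum
  set A := ∑ k ∈ Finset.Ico (s n) (n+1), α (k+1) with hAdef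
  have hsumle : A ≤ ((n:ℝ)+1 - s n) * (1/(((s n:ℝ)+1) * Real.log ((s n:ℝ)+1))) := by
    have hcard : (Finset.Ico (s n) (n+1)).card = n + 1 - s n := Nat.card_Ico _ _
    have hterm : ∀ k ∈ Finset.Ico (s n) (n+1),
        α (k+1) ≤ 1/(((s n:ℝ)+1) * Real.log ((s n:ℝ)+1)) := by
      intro k hk
      rw [Finset.mem_Ico] at hk
      have hks : (s n:ℝ) ≤ (k:ℝ) := by exact_mod_cast hk.1
      have hk1 : (3:ℝ) ≤ (k:ℝ)+1 := by linarith
      have hlk : Real.log ((s n:ℝ)+1) ≤ Real.log ((k:ℝ)+1) :=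
        Real.log_le_log (by linarith) (by linarith)
      have hlkpos : 0 < Real.log ((k:ℝ)+1) := by linarith
      rw [hform (k+1) (by omega)]
      push_cast
      apply one_div_le_one_div_of_le (by positivity)
      apply mul_le_mul (by linarith) hlk hlogspos.le (by linarith)
    calc A ≤ (Finset.Ico (s n) (n+1)).card • (1/(((s n:ℝ)+1) * Real.log ((s n:ℝ)+1))) :=
          Finset.sum_le_card_nsmul _ _ _ hterm
      _ = ((n + 1 - s n : ℕ):ℝ) * (1/(((s n:ℝ)+1) * Real.log ((s n:ℝ)+1))) := by
          rw [hcard, nsmul_eq_mul]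
      _ = ((n:ℝ)+1 - s n) * (1/(((s n:ℝ)+1) * Real.log ((s n:ℝ)+1))) := by
          rw [Nat.cast_sub (by have := hs n; omega)]
          push_cast
          ring
  have hAnn : 0 ≤ A := Finset.sum_nonneg fun k _ => (hα _).le
  -- A ≤ 2(K+1)/log n
  have hA2 : A ≤ 2*(K+1) / Real.log (n:ℝ) := by
    have h1 : ((n:ℝ)+1 - s n) ≤ (K+1) * ((s n:ℝ)+1) := by nlinarith [hd n]
    have h2 : A ≤ ((K+1) * ((s n:ℝ)+1)) * (1/(((s n:ℝ)+1) * Real.log ((s n:ℝ)+1))) := by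
      refine le_trans hsumle (mul_le_mul_of_nonneg_right h1 (by positivity))
    have h3' : ((K+1) * ((s n:ℝ)+1)) * (1/(((s n:ℝ)+1) * Real.log ((s n:ℝ)+1)))
        = (K+1) / Real.log ((s n:ℝ)+1) := by
      field_simp
    rw [h3'] at h2
    refine le_trans h2 ?_
    rw [div_le_div_iff₀ hlogspos hlnpos]
    have hx := mul_le_mul_of_nonneg_left hlogs (show (0:ℝ) ≤ 2*(K+1) by linarith)
    linarith [hx]
  -- α (n+1) ≤ 1/(n log n)
  have hα1 : α (n+1) ≤ 1/((n:ℝ) * Real.log (n:ℝ)) := by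
    rw [hform (n+1) (by omega)]
    push_cast
    apply one_div_le_one_div_of_le (by positivity)
    have hln1pos : 0 < Real.log ((n:ℝ)+1) := by linarith
    apply mul_le_mul (by linarith) hmono hlnpos.le (by linarith)
  -- f n ≤ 2(K+1)/(n (log n)^2)
  have hf1 : α (n+1) * A ≤ 2*(K+1)/((n:ℝ) * (Real.log (n:ℝ))^2) := by
    calc α (n+1) * A ≤ (1/((n:ℝ) * Real.log (n:ℝ))) * (2*(K+1) / Real.log (n:ℝ)) :=
          mul_le_mul hα1 hA2 hAnn (by positivity)
      _ = 2*(K+1)/((n:ℝ) * (Real.log (n:ℝ))^2) := by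
          field_simp
  -- telescoping bound
  set ln := Real.log (n:ℝ) with hlndef
  set ln1 := Real.log ((n:ℝ)+1) with hln1def
  have hln1pos : 0 < ln1 := by rw [hln1def]; linarith
  have hhalf : (1:ℝ)/2 ≤ (n:ℝ) * (ln1 - ln) := by
    have h6 : 1/(2*(n:ℝ)) ≤ 1/((n:ℝ)+1) := by
      apply one_div_le_one_div_of_le (by linarith) (by linarith)
    have h7 : 1/(2*(n:ℝ)) ≤ ln1 - ln := le_trans h6 hdiff
    have h8 : (n:ℝ) * (1/(2*(n:ℝ))) = 1/2 := by field_simp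
    calc (1:ℝ)/2 = (n:ℝ) * (1/(2*(n:ℝ))) := h8.symm
      _ ≤ (n:ℝ) * (ln1 - ln) := mul_le_mul_of_nonneg_left h7 hnpos.le
  have hcast : ((n+1 : ℕ):ℝ) = (n:ℝ)+1 := by push_cast; ring
  show α (n+1) * A ≤ 8*(K+1)/Real.log ((n:ℕ):ℝ) - 8*(K+1)/Real.log (((n+1:ℕ)):ℝ)
  rw [hcast]
  have heq : 8*(K+1)/ln - 8*(K+1)/ln1 = 8*(K+1)*(ln1 - ln)/(ln * ln1) := by
    field_simp
  rw [heq]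
  refine le_trans hf1 ?_
  rw [div_le_div_iff₀ (by positivity) (by positivity)]
  nlinarith [mul_le_mul_of_nonneg_left hhalf (show (0:ℝ) ≤ 8*(K+1)*ln^2 by positivity),
    mul_le_mul_of_nonneg_left h3 (show (0:ℝ) ≤ 2*(K+1)*ln by positivity)]

lemma helper_two_le_log {x : ℝ} (hx : 8 ≤ x) : 2 ≤ Real.log x := by
  rw [Real.le_log_iff_exp_le (by linarith)]
  have h := Real.exp_one_lt_d9
  have h2 : Real.exp 2 = Real.exp 1 * Real.exp 1 := by
    rw [← Real.exp_add]; norm_num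
  nlinarith [Real.exp_pos 1]

lemma helper_logloglog_tendsto :
    Tendsto (fun n : ℕ => Real.log (Real.log (Real.log (n:ℝ)))) atTop atTop :=
  Real.tendsto_log_atTop.comp (Real.tendsto_log_atTop.comp
    (Real.tendsto_log_atTop.comp tendsto_natCast_atTop_atTop))

lemma helper_loglog_tendsto' :
    Tendsto (fun n : ℕ => Real.log (Real.log (n:ℝ))) atTop atTop :=
  Real.tendsto_log_atTop.comp (Real.tendsto_log_atTop.comp tendsto_natCast_atTop_atTop)

-- basic facts bundle at a point n ≥ 16
lemma helper_case4_basic {z : ℝ} (hz : 16 ≤ z) :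
    2 ≤ Real.log z ∧ Real.log 2 ≤ Real.log (Real.log z) ∧ 0 < Real.log (Real.log z) := by
  have h1 : 2 ≤ Real.log z := helper_two_le_log (by linarith)
  have h2 : Real.log 2 ≤ Real.log (Real.log z) := Real.log_le_log (by norm_num) h1
  have h3 : 0 < Real.log (Real.log z) :=
    lt_of_lt_of_le (Real.log_pos (by norm_num)) h2
  exact ⟨h1, h2, h3⟩

-- L2(x+1) ≤ 2 L2 x when log x ≥ 2
lemma helper_L2_succ_le {z : ℝ} (hz : 16 ≤ z) :
    Real.log (Real.log (z + 1)) ≤ 2 * Real.log (Real.log z) := by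
  obtain ⟨h1, h2, h3⟩ := helper_case4_basic hz
  have hzpos : (0:ℝ) < z := by linarith
  have h4 : Real.log (z + 1) ≤ 2 * Real.log z := helper_log_succ_le (by linarith)
  have h5 : Real.log (Real.log (z+1)) ≤ Real.log (2 * Real.log z) :=
    Real.log_le_log (lt_of_lt_of_le (by linarith) (Real.log_le_log hzpos (by linarith))) h4
  rw [Real.log_mul (by norm_num) (by linarith)] at h5
  linarith

-- per-term bound for the inner sum, k ≥ 3
lemma helper_case4_term {k : ℕ} (hk : 3 ≤ k) :
    1/(((k:ℝ)+1) * Real.log ((k:ℝ)+1))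
      ≤ 4 * (Real.log (Real.log ((k:ℝ)+2)) - Real.log (Real.log ((k:ℝ)+1))) := by
  have hk3 : (3:ℝ) ≤ (k:ℝ) := by exact_mod_cast hk
  set lk1 := Real.log ((k:ℝ)+1) with hlk1
  set lk2 := Real.log ((k:ℝ)+2) with hlk2
  have h1 : 1 ≤ lk1 := helper_one_le_log (by linarith)
  have hlk1pos : 0 < lk1 := by linarith
  have hmono : lk1 ≤ lk2 := Real.log_le_log (by linarith) (by linarith)
  have hlk2pos : 0 < lk2 := by linarith
  have h2 : 1/((k:ℝ)+2) ≤ lk2 - lk1 := by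
    have := helper_log_diff_ge (x := (k:ℝ)+1) (by linarith)
    have he : (k:ℝ)+1+1 = (k:ℝ)+2 := by ring
    rw [he] at this
    exact this
  have h3 : lk2 ≤ 2 * lk1 := by
    have := helper_log_succ_le (x := (k:ℝ)+1) (by linarith)
    have he : (k:ℝ)+1+1 = (k:ℝ)+2 := by ring
    rw [he] at this
    exact this
  have h4 : 1 - lk1/lk2 ≤ Real.log lk2 - Real.log lk1 := helper_log_sub_ge hlk1pos hmono
  have h5 : (lk2 - lk1)/lk2 = 1 - lk1/lk2 := by field_simp
  have hstep : 1/(((k:ℝ)+1)*lk1) ≤ 4 * ((1/((k:ℝ)+2))/lk2) := by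
    rw [div_div, mul_one_div]
    rw [div_le_div_iff₀ (by positivity) (by positivity)]
    nlinarith [mul_le_mul (show (k:ℝ)+2 ≤ 2*((k:ℝ)+1) by linarith) h3 hlk2pos.le
      (show (0:ℝ) ≤ 2*((k:ℝ)+1) by linarith)]
  have h6 : (1/((k:ℝ)+2))/lk2 ≤ (lk2 - lk1)/lk2 := (div_le_div_iff_of_pos_right hlk2pos).2 h2
  calc 1/(((k:ℝ)+1) * lk1) ≤ 4 * ((1/((k:ℝ)+2))/lk2) := hstep
    _ ≤ 4 * ((lk2 - lk1)/lk2) := by linarith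
    _ = 4 * (1 - lk1/lk2) := by rw [h5]
    _ ≤ 4 * (Real.log lk2 - Real.log lk1) := by linarith

lemma helper_case4_div {α : ℕ → ℝ} (hα : ∀ n, 0 < α n)
    (hform : ∀ n : ℕ, 3 ≤ n → α n = 1 / (n * Real.log n * Real.log (Real.log n))) :
    ¬ Summable α := by
  intro h
  refine helper_not_summable (f := fun n => α (n+1))
    (t := fun n : ℕ => Real.log (Real.log (Real.log (n:ℝ)))) 16 8 (by norm_num)
    (fun n => (hα _).le) (fun n hn => ?_) helper_logloglog_tendsto
    ((summable_nat_add_iff 1).2 h)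
  have hn16 : (16:ℝ) ≤ (n:ℝ) := by exact_mod_cast hn
  have hnpos : (0:ℝ) < n := by linarith
  obtain ⟨hln2, hl2log2, hl2pos⟩ := helper_case4_basic hn16
  set ln := Real.log (n:ℝ) with hln
  set ln1 := Real.log ((n:ℝ)+1) with hln1
  set l2 := Real.log ln with hl2
  set l21 := Real.log ln1 with hl21
  have hlnpos : 0 < ln := by linarith
  have hmono : ln ≤ ln1 := Real.log_le_log hnpos (by linarith)
  have hln1pos : 0 < ln1 := by linarith
  have hl2mono : l2 ≤ l21 := Real.log_le_log hlnpos hmono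
  have hl21pos : 0 < l21 := by linarith
  -- t diff ≤ 1/(n ln l2)
  have h1 : Real.log l21 - Real.log l2 ≤ l21/l2 - 1 := helper_log_sub_le hl2pos hl2mono
  have h2 : l21 - l2 ≤ (ln1 - ln)/ln := by
    have := helper_log_sub_le hlnpos hmono
    have he : ln1/ln - 1 = (ln1 - ln)/ln := by field_simp
    linarith [he ▸ this]
  have h3 : ln1 - ln ≤ 1/(n:ℝ) := helper_log_diff_le hnpos
  have h4 : ln1 ≤ 2 * ln := helper_log_succ_le (by linarith)
  have h5 : l21 ≤ 2 * l2 := helper_L2_succ_le hn16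
  -- t(n+1) - t(n) ≤ (l21 - l2)/l2
  have h6 : Real.log l21 - Real.log l2 ≤ (l21 - l2)/l2 := by
    have he : l21/l2 - 1 = (l21 - l2)/l2 := by field_simp
    linarith [he ▸ h1]
  have h7 : (l21 - l2)/l2 ≤ ((1/(n:ℝ))/ln)/l2 := by
    apply (div_le_div_iff_of_pos_right hl2pos).2
    calc l21 - l2 ≤ (ln1 - ln)/ln := h2
      _ ≤ (1/(n:ℝ))/ln := (div_le_div_iff_of_pos_right hlnpos).2 h3
  -- α (n+1) = 1/((n+1) ln1 l21)
  have hform1 : α (n+1) = 1 / (((n:ℝ)+1) * ln1 * l21) := by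
    rw [hform (n+1) (by omega), show ((n+1:ℕ):ℝ) = (n:ℝ)+1 from by push_cast; ring]
  have h8 : ((1/(n:ℝ))/ln)/l2 ≤ 8 * (1 / (((n:ℝ)+1) * ln1 * l21)) := by
    rw [div_div, div_div, mul_one_div]
    rw [div_le_div_iff₀ (by positivity) (by positivity)]
    have e1 : ((n:ℝ)+1) ≤ 2*(n:ℝ) := by linarith
    have e2 : ((n:ℝ)+1)*ln1 ≤ (2*(n:ℝ))*(2*ln) := mul_le_mul e1 h4 hln1pos.le (by linarith)
    have e3 : (((n:ℝ)+1)*ln1)*l21 ≤ ((2*(n:ℝ))*(2*ln))*(2*l2) :=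
      mul_le_mul e2 h5 hl21pos.le (by positivity)
    nlinarith [e3]
  have hcast : ((n+1 : ℕ):ℝ) = (n:ℝ)+1 := by push_cast; ring
  show Real.log (Real.log (Real.log (((n+1:ℕ)):ℝ))) - Real.log (Real.log (Real.log ((n:ℝ))))
    ≤ 8 * α (n+1)
  rw [hcast, hform1]
  calc Real.log (Real.log (Real.log ((n:ℝ)+1))) - Real.log (Real.log (Real.log (n:ℝ)))
      = Real.log l21 - Real.log l2 := rfl
    _ ≤ (l21 - l2)/l2 := h6
    _ ≤ ((1/(n:ℝ))/ln)/l2 := h7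
    _ ≤ 8 * (1 / (((n:ℝ)+1) * ln1 * l21)) := h8

set_option maxHeartbeats 1000000 in
lemma helper_case4_W {s : ℕ → ℕ} {α : ℕ → ℝ} (hα : ∀ n, 0 < α n) (hs : ∀ n, s n ≤ n)
    {K q : ℝ} (hK : 0 < K) (hq : 1 ≤ q)
    (hd : ∀ n : ℕ, (n:ℝ) - (s n : ℝ) ≤ K * (s n:ℝ)^q)
    (hform : ∀ n : ℕ, 3 ≤ n → α n = 1 / (n * Real.log n * Real.log (Real.log n))) :
    Summable (fun n => α (n+1) * ∑ k ∈ Finset.Ico (s n) (n+1), α (k+1)) := by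
  have hq0 : (0:ℝ) < q := by linarith
  have hst : Tendsto s atTop atTop := helper_s_tendsto hK (by linarith) hd
  have e1 : ∀ᶠ n:ℕ in atTop, 2*Real.log (2*K) + 2*Real.log 2 + 4 ≤ Real.log (n:ℝ) :=
    (Real.tendsto_log_atTop.comp tendsto_natCast_atTop_atTop).eventually_ge_atTop _
  have e2 : ∀ᶠ n:ℕ in atTop, 2*Real.log (2*q) + 4 ≤ Real.log (Real.log (n:ℝ)) :=
    helper_loglog_tendsto'.eventually_ge_atTop _
  have e3 : ∀ᶠ n:ℕ in atTop, 3 ≤ s n := hst.eventually_ge_atTop 3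
  have e4 : ∀ᶠ n:ℕ in atTop, 16 ≤ n := eventually_ge_atTop 16
  obtain ⟨N, hN⟩ := eventually_atTop.1 ((e1.and e2).and (e3.and e4))
  refine helper_summable_of_eventually_le_sub
    (t := fun m : ℕ => 256*q/Real.log (Real.log (m:ℝ))) N
    (fun n => mul_nonneg (hα _).le (Finset.sum_nonneg fun k _ => (hα _).le))
    (fun n hn => ?_) (fun n hn => ?_)
  · obtain ⟨⟨hA1, hA2⟩, hA3, hA4⟩ := hN n hn
    have h16 : (16:ℝ) ≤ (n:ℝ) := by exact_mod_cast hA4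
    obtain ⟨_, _, hl2pos⟩ := helper_case4_basic h16
    positivity
  obtain ⟨⟨hlnbig, hl2big⟩, hs3, hn16⟩ := hN n hn
  have h16 : (16:ℝ) ≤ (n:ℝ) := by exact_mod_cast hn16
  have hnpos : (0:ℝ) < n := by linarith
  obtain ⟨hln2, hl2log2, hl2pos⟩ := helper_case4_basic h16
  set ln := Real.log (n:ℝ) with hlndef
  set l2 := Real.log ln with hl2def
  have hlnpos : (0:ℝ) < ln := by linarith
  have hlog2pos : (0:ℝ) < Real.log 2 := Real.log_pos (by norm_num)
  have hlog2q : Real.log 2 ≤ Real.log (2*q) := Real.log_le_log (by norm_num) (by linarith)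
  have hl24 : (4:ℝ) ≤ l2 := by linarith
  have hs3R : (3:ℝ) ≤ (s n : ℝ) := by exact_mod_cast hs3
  have hsnn' : (s n : ℝ) ≤ (n:ℝ) := by exact_mod_cast hs n
  set sn := (s n : ℝ) with hsndef
  have hsnpos : (0:ℝ) < sn := by linarith
  have hsnn : sn ≤ (n:ℝ) := hsnn' 
  -- Step 1 : log sn ≥ ln/(2q)
  have hlogs : (1/(2*q)) * ln ≤ Real.log sn := by
    have hln2log2 : 2*Real.log 2 ≤ ln := by
      have hl2' : Real.log 2 ≤ 1 := by
        have := Real.log_le_sub_one_of_pos (x := (2:ℝ)) (by norm_num)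
        linarith
      linarith [hln2]
    by_cases hcase : (n:ℝ) ≤ 2 * sn
    · have h1 : Real.log ((n:ℝ)/2) ≤ Real.log sn :=
        Real.log_le_log (by positivity) (by linarith)
      rw [Real.log_div (ne_of_gt hnpos) (by norm_num)] at h1
      have h2 : (1/(2*q)) * ln ≤ (1/2) * ln := by
        apply mul_le_mul_of_nonneg_right _ hlnpos.le
        rw [div_le_div_iff₀ (by positivity) (by norm_num)]
        linarith
      have h3 : (1/2) * ln ≤ ln - Real.log 2 := by linarith
      linarith
    · push_neg at hcase
      have h1 : (n:ℝ)/2 ≤ K * sn^q := by nlinarith [hd n]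
      have h2 : Real.log ((n:ℝ)/2) ≤ Real.log (K * sn^q) :=
        Real.log_le_log (by positivity) h1
      rw [Real.log_div (ne_of_gt hnpos) (by norm_num),
        Real.log_mul (ne_of_gt hK) (ne_of_gt (Real.rpow_pos_of_pos hsnpos q)),
        Real.log_rpow hsnpos] at h2
      have hlog2K : Real.log (2*K) = Real.log 2 + Real.log K :=
        Real.log_mul (by norm_num) (ne_of_gt hK)
      have h3 : ln/2 ≤ q * Real.log sn := by linarith
      have h4 : (1/(2*q)) * ln = ln/(2*q) := by ring
      rw [h4, div_le_iff₀ (by positivity : (0:ℝ) < 2*q)]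
      nlinarith [h3]
  -- Step 2
  have hlogsnpos : (0:ℝ) < Real.log sn := lt_of_lt_of_le (by positivity) hlogs
  have hlogs1 : (1/(2*q)) * ln ≤ Real.log (sn+1) :=
    le_trans hlogs (Real.log_le_log hsnpos (by linarith))
  have hlogs1pos : (0:ℝ) < Real.log (sn+1) := lt_of_lt_of_le (by positivity) hlogs1
  -- Step 3 : L2(sn+1) ≥ l2/2
  set L := Real.log (Real.log (sn+1)) with hLdef
  have hL2s : (1/2) * l2 ≤ L := by
    have h1 : Real.log ((1/(2*q)) * ln) ≤ L :=
      Real.log_le_log (by positivity) hlogs1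
    rw [Real.log_mul (by positivity) (ne_of_gt hlnpos), one_div, Real.log_inv] at h1
    linarith
  have hLpos : (0:ℝ) < L := by linarith
  -- Step 4 : bound on the sum A
  set u : ℕ → ℝ := fun j => Real.log (Real.log ((j:ℝ)+1)) with hudef
  have hu : ∀ j:ℕ, u (j+1) = Real.log (Real.log ((j:ℝ)+2)) := by
    intro j
    simp only [hudef]
    rw [show ((j+1:ℕ):ℝ) + 1 = (j:ℝ)+2 from by push_cast; ring]
  set A := ∑ k ∈ Finset.Ico (s n) (n+1), α (k+1) with hAdef
  have hAnn : 0 ≤ A := Finset.sum_nonneg fun k _ => (hα _).le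
  have hterm : ∀ k ∈ Finset.Ico (s n) (n+1), α (k+1) ≤ (4/L) * (u (k+1) - u k) := by
    intro k hk
    rw [Finset.mem_Ico] at hk
    have hk3 : 3 ≤ k := le_trans hs3 hk.1
    have hk3R : (3:ℝ) ≤ (k:ℝ) := by exact_mod_cast hk3
    have hksR : sn ≤ (k:ℝ) := by rw [hsndef]; exact_mod_cast hk.1
    have hlk1 : (1:ℝ) ≤ Real.log ((k:ℝ)+1) := helper_one_le_log (by linarith)
    have hlkpos : (0:ℝ) < Real.log ((k:ℝ)+1) := by linarith
    -- L2(k+1) ≥ L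
    have hL2k : L ≤ Real.log (Real.log ((k:ℝ)+1)) :=
      Real.log_le_log hlogs1pos (Real.log_le_log (by linarith) (by linarith))
    have hL2kpos : (0:ℝ) < Real.log (Real.log ((k:ℝ)+1)) := lt_of_lt_of_le hLpos hL2k
    -- the term bound
    have hb1 : 1/(((k:ℝ)+1) * Real.log ((k:ℝ)+1)) ≤ 4 * (u (k+1) - u k) := by
      rw [hu k]
      simp only [hudef]
      exact helper_case4_term hk3
    have hb2 : 1/Real.log (Real.log ((k:ℝ)+1)) ≤ 1/L :=
      one_div_le_one_div_of_le hLpos hL2k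
    have hform2 : α (k+1) = (1/(((k:ℝ)+1) * Real.log ((k:ℝ)+1)))
        * (1/Real.log (Real.log ((k:ℝ)+1))) := by
      rw [hform (k+1) (by omega), show ((k+1:ℕ):ℝ) = (k:ℝ)+1 from by push_cast; ring]
      field_simp
    rw [hform2]
    have hprod := mul_le_mul hb1 hb2 (by positivity) (by
      have h0 : (0:ℝ) < 1/(((k:ℝ)+1) * Real.log ((k:ℝ)+1)) := by positivity
      linarith)
    calc (1/(((k:ℝ)+1) * Real.log ((k:ℝ)+1))) * (1/Real.log (Real.log ((k:ℝ)+1)))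
        ≤ (4 * (u (k+1) - u k)) * (1/L) := hprod
      _ = (4/L) * (u (k+1) - u k) := by ring
  have hsum : A ≤ (4/L) * (u (n+1) - u (s n)) := by
    calc A ≤ ∑ k ∈ Finset.Ico (s n) (n+1), (4/L) * (u (k+1) - u k) :=
          Finset.sum_le_sum hterm
      _ = (4/L) * ∑ k ∈ Finset.Ico (s n) (n+1), (u (k+1) - u k) := by
          rw [Finset.mul_sum]
      _ = (4/L) * (u (n+1) - u (s n)) := by
          rw [helper_sum_telescope u (le_trans (hs n) (Nat.le_succ n))]
  -- Step 4b : u(n+1) - u(s n) ≤ 4q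
  have hdiffb : u (n+1) - u (s n) ≤ 4*q := by
    rw [hu n]
    simp only [hudef]
    rw [← hsndef]
    have hmono2 : Real.log (sn+1) ≤ Real.log ((n:ℝ)+2) :=
      Real.log_le_log (by linarith) (by linarith)
    have h1 : Real.log (Real.log ((n:ℝ)+2)) - Real.log (Real.log (sn+1))
        ≤ Real.log ((n:ℝ)+2) / Real.log (sn+1) - 1 :=
      helper_log_sub_le hlogs1pos hmono2
    have h2 : Real.log ((n:ℝ)+2) ≤ 2 * ln := by
      have h3 : Real.log ((n:ℝ)+2) ≤ Real.log ((n:ℝ)^2) :=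
        Real.log_le_log (by linarith) (by nlinarith)
      rw [Real.log_pow] at h3
      push_cast at h3
      linarith
    have h4 : Real.log ((n:ℝ)+2) / Real.log (sn+1) ≤ (2*ln) / ((1/(2*q)) * ln) :=
      div_le_div₀ (by positivity) h2 (by positivity) hlogs1
    have h5 : (2*ln) / ((1/(2*q)) * ln) = 4*q := by
      field_simp
      ring
    linarith
  have hA3 : A ≤ 32*q/l2 := by
    have h1 : (4/L) * (u (n+1) - u (s n)) ≤ (4/L) * (4*q) :=
      mul_le_mul_of_nonneg_left hdiffb (by positivity)
    have h2 : (4/L) * (4*q) ≤ 32*q/l2 := by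
      rw [div_mul_eq_mul_div, div_le_div_iff₀ hLpos (by positivity)]
      nlinarith [hL2s]
    linarith
  -- Step 5 : α (n+1) ≤ 1/(n ln l2)
  set ln1 := Real.log ((n:ℝ)+1) with hln1def
  set l21 := Real.log ln1 with hl21def
  have hmono3 : ln ≤ ln1 := Real.log_le_log hnpos (by linarith)
  have hln1pos : (0:ℝ) < ln1 := by linarith
  have hl21mono : l2 ≤ l21 := Real.log_le_log hlnpos hmono3
  have hl21pos : (0:ℝ) < l21 := by linarith
  have hα1 : α (n+1) ≤ 1/((n:ℝ) * ln * l2) := by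
    rw [hform (n+1) (by omega), show ((n+1:ℕ):ℝ) = (n:ℝ)+1 from by push_cast; ring]
    apply one_div_le_one_div_of_le (by positivity)
    have e2' : (n:ℝ)*ln ≤ ((n:ℝ)+1)*ln1 :=
      mul_le_mul (by linarith) hmono3 hlnpos.le (by linarith)
    calc (n:ℝ) * ln * l2 ≤ ((n:ℝ)+1) * ln1 * l21 :=
          mul_le_mul e2' hl21mono hl2pos.le (by positivity)
      _ = ((n:ℝ)+1) * ln1 * l21 := rfl
  -- Step 6
  have hf1 : α (n+1) * A ≤ 32*q/((n:ℝ) * ln * l2^2) := by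
    calc α (n+1) * A ≤ (1/((n:ℝ) * ln * l2)) * (32*q/l2) :=
          mul_le_mul hα1 hA3 hAnn (by positivity)
      _ = 32*q/((n:ℝ) * ln * l2^2) := by
          field_simp
  -- Step 7 : telescoping
  have hquarter : 1/(4*(n:ℝ)*ln) ≤ l21 - l2 := by
    have h1 : 1 - ln/ln1 ≤ l21 - l2 := helper_log_sub_ge hlnpos hmono3
    have h1' : (ln1 - ln)/ln1 = 1 - ln/ln1 := by field_simp
    have h2 : 1/((n:ℝ)+1) ≤ ln1 - ln := helper_log_diff_ge hnpos
    have h3 : ln1 ≤ 2*ln := helper_log_succ_le (by linarith)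
    have h4 : (1/(2*(n:ℝ)))/(2*ln) ≤ (ln1 - ln)/ln1 := by
      apply div_le_div₀ (by linarith) _ (by positivity) (by linarith)
      calc 1/(2*(n:ℝ)) ≤ 1/((n:ℝ)+1) := by
            apply one_div_le_one_div_of_le (by linarith) (by linarith)
        _ ≤ ln1 - ln := h2
    have h5 : (1/(2*(n:ℝ)))/(2*ln) = 1/(4*(n:ℝ)*ln) := by
      field_simp
      ring
    linarith [h1' ▸ h4]
  have hl21le2 : l21 ≤ 2*l2 := helper_L2_succ_le h16
  show α (n+1) * A ≤ 256*q/Real.log (Real.log ((n:ℕ):ℝ))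
    - 256*q/Real.log (Real.log (((n+1:ℕ)):ℝ))
  rw [show ((n+1:ℕ):ℝ) = (n:ℝ)+1 from by push_cast; ring]
  have heq : 256*q/l2 - 256*q/l21 = 256*q*(l21 - l2)/(l2 * l21) := by
    field_simp
  have hfinal : 32*q/((n:ℝ) * ln * l2^2) ≤ 256*q*(l21 - l2)/(l2 * l21) := by
    rw [div_le_div_iff₀ (by positivity) (by positivity)]
    have hq4 : (1:ℝ)/4 ≤ (n:ℝ)*ln*(l21 - l2) := by
      have := mul_le_mul_of_nonneg_left hquarter (show (0:ℝ) ≤ (n:ℝ)*ln by positivity)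
      have he : (n:ℝ)*ln*(1/(4*(n:ℝ)*ln)) = 1/4 := by field_simp
      linarith [he ▸ this]
    nlinarith [mul_le_mul_of_nonneg_left hq4 (show (0:ℝ) ≤ 256*q*l2^2 by positivity),
      mul_le_mul_of_nonneg_left hl21le2 (show (0:ℝ) ≤ 32*q*l2 by positivity)]
  calc α (n+1) * A ≤ 32*q/((n:ℝ) * ln * l2^2) := hf1
    _ ≤ 256*q*(l21 - l2)/(l2 * l21) := hfinal
    _ = 256*q/l2 - 256*q/l21 := heq.symm



variable {d : ℕ} {Xset : Set (EuclideanSpace ℝ (Fin d))}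
  {proj : EuclideanSpace ℝ (Fin d) → EuclideanSpace ℝ (Fin d)}

lemma helper_proj_obtuse (hXconv : Convex ℝ Xset)
    (hprojmem : ∀ y, proj y ∈ Xset)
    (hprojmin : ∀ y, ∀ x ∈ Xset, ‖y - proj y‖ ≤ ‖y - x‖)
    (y : EuclideanSpace ℝ (Fin d)) {z : EuclideanSpace ℝ (Fin d)} (hz : z ∈ Xset) :
    ⟪y - proj y, z - proj y⟫ ≤ 0 := by
  haveI : Nonempty ↑Xset := ⟨⟨proj y, hprojmem y⟩⟩
  have heq : ‖y - proj y‖ = ⨅ w : Xset, ‖y - (w : EuclideanSpace ℝ (Fin d))‖ := by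
    refine le_antisymm (le_ciInf fun w => hprojmin y w w.2) ?_
    exact ciInf_le ⟨0, by rintro r ⟨w, rfl⟩; positivity⟩ (⟨proj y, hprojmem y⟩ : Xset)
  exact (norm_eq_iInf_iff_real_inner_le_zero hXconv (hprojmem y)).1 heq z hz

lemma helper_proj_nonexp (hXconv : Convex ℝ Xset)
    (hprojmem : ∀ y, proj y ∈ Xset)
    (hprojmin : ∀ y, ∀ x ∈ Xset, ‖y - proj y‖ ≤ ‖y - x‖)
    (u v : EuclideanSpace ℝ (Fin d)) : ‖proj u - proj v‖ ≤ ‖u - v‖ := by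
  have h1 : ⟪u - proj u, proj v - proj u⟫ ≤ 0 :=
    helper_proj_obtuse hXconv hprojmem hprojmin u (hprojmem v)
  have h2 : ⟪v - proj v, proj u - proj v⟫ ≤ 0 :=
    helper_proj_obtuse hXconv hprojmem hprojmin v (hprojmem u)
  have key : ‖proj u - proj v‖^2 ≤ ⟪u - v, proj u - proj v⟫ := by
    have e1 : ⟪u - v, proj u - proj v⟫
        = ⟪u - proj u, proj u - proj v⟫ + ⟪proj u - proj v, proj u - proj v⟫
          + ⟪proj v - v, proj u - proj v⟫ := by
      rw [← inner_add_left, ← inner_add_left]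
      congr 1
      abel
    have e2 : ⟪u - proj u, proj u - proj v⟫ = - ⟪u - proj u, proj v - proj u⟫ := by
      rw [← inner_neg_right]
      congr 1
      abel
    have e3 : ⟪proj v - v, proj u - proj v⟫ = - ⟪v - proj v, proj u - proj v⟫ := by
      rw [← inner_neg_left]
      congr 1
      abel
    rw [e1, e2, e3, real_inner_self_eq_norm_sq]
    linarith
  have hcs : ⟪u - v, proj u - proj v⟫ ≤ ‖u - v‖ * ‖proj u - proj v‖ :=
    real_inner_le_norm _ _
  by_cases h0 : ‖proj u - proj v‖ = 0
  · rw [h0]; positivity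
  · have hpos : 0 < ‖proj u - proj v‖ := lt_of_le_of_ne (norm_nonneg _) (Ne.symm h0)
    nlinarith

lemma helper_Eaux_eq (proj : EuclideanSpace ℝ (Fin d) → EuclideanSpace ℝ (Fin d))
    (xs y : EuclideanSpace ℝ (Fin d)) :
    Eaux proj xs y = ‖y - xs‖^2 - ‖y - proj y‖^2 := by
  rw [Eaux, norm_sub_sq_real, norm_sub_sq_real, inner_sub_right]
  ring

lemma helper_Eaux_nonneg
    (hprojmin : ∀ y, ∀ x ∈ Xset, ‖y - proj y‖ ≤ ‖y - x‖)
    {xs : EuclideanSpace ℝ (Fin d)} (hxs : xs ∈ Xset) (y : EuclideanSpace ℝ (Fin d)) :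
    0 ≤ Eaux proj xs y := by
  rw [helper_Eaux_eq]
  have h := hprojmin y xs hxs
  nlinarith [norm_nonneg (y - proj y), norm_nonneg (y - xs)]

lemma helper_Eaux_step (hXconv : Convex ℝ Xset)
    (hprojmem : ∀ y, proj y ∈ Xset)
    (hprojmin : ∀ y, ∀ x ∈ Xset, ‖y - proj y‖ ≤ ‖y - x‖)
    (xs : EuclideanSpace ℝ (Fin d))
    (y v : EuclideanSpace ℝ (Fin d)) (γ : ℝ) :
    Eaux proj xs (y - γ • v) ≤ Eaux proj xs y - 2*γ*⟪v, proj y - xs⟫ + γ^2 * ‖v‖^2 := by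
  set y' := y - γ • v with hy'
  rw [helper_Eaux_eq, helper_Eaux_eq]
  have h1 : ‖y' - xs‖^2 = ‖y - xs‖^2 - 2*γ*⟪v, y - xs⟫ + γ^2*‖v‖^2 := by
    have e : y' - xs = (y - xs) - γ • v := by rw [hy']; abel
    rw [e, norm_sub_sq_real, real_inner_smul_right, norm_smul, mul_pow, real_inner_comm]
    simp [sq_abs]
    ring
  have h2 : ‖y - proj y‖^2 - 2*γ*⟪v, y - proj y⟫ ≤ ‖y' - proj y'‖^2 := by
    have hobt : ⟪y - proj y, proj y' - proj y⟫ ≤ 0 :=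
      helper_proj_obtuse hXconv hprojmem hprojmin y (hprojmem y')
    set a := y - proj y with ha
    set b := (-γ) • v with hb
    set c := proj y - proj y' with hc
    have e : y' - proj y' = a + (b + c) := by
      rw [ha, hb, hc, hy']; module
    have e2 : ‖a + (b + c)‖^2 = ‖a‖^2 + 2*⟪a, b⟫ + 2*⟪a,c⟫ + ‖b + c‖^2 := by
      rw [norm_add_sq_real, inner_add_right]
      ring
    have e3 : ⟪a, b⟫ = -γ * ⟪v, a⟫ := by
      rw [hb, real_inner_smul_right, real_inner_comm]
    have e4 : 0 ≤ ⟪a, c⟫ := by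
      have : ⟪a, c⟫ = - ⟪y - proj y, proj y' - proj y⟫ := by
        rw [ha, hc, ← inner_neg_right]
        congr 1
        abel
      rw [this]
      linarith
    have e5 : 0 ≤ ‖b + c‖^2 := by positivity
    rw [e, e2]
    have := real_inner_comm v a
    nlinarith [e3]
  have h3 : ⟪v, y - xs⟫ - ⟪v, y - proj y⟫ = ⟪v, proj y - xs⟫ := by
    rw [← inner_sub_right]
    congr 1
    abel
  have h4 : 2*γ*⟪v, y - xs⟫ - 2*γ*⟪v, y - proj y⟫ = 2*γ*⟪v, proj y - xs⟫ := by
    linear_combination (2*γ) * h3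
  linarith



lemma helper_key {d : ℕ} (Xset : Set (EuclideanSpace ℝ (Fin d)))
    (hXc : IsCompact Xset) (hXconv : Convex ℝ Xset)
    (proj : EuclideanSpace ℝ (Fin d) → EuclideanSpace ℝ (Fin d))
    (hprojmem : ∀ y, proj y ∈ Xset)
    (hprojmin : ∀ y, ∀ x ∈ Xset, ‖y - proj y‖ ≤ ‖y - x‖)
    (gradf : EuclideanSpace ℝ (Fin d) → EuclideanSpace ℝ (Fin d))
    (hgc : Continuous gradf)
    (Xstar : Set (EuclideanSpace ℝ (Fin d))) (hsub : Xstar ⊆ Xset)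
    (xstar : EuclideanSpace ℝ (Fin d)) (hxstar : xstar ∈ Xstar)
    (hVC : ∀ x ∈ Xset, ∀ xs ∈ Xstar,
      0 ≤ ⟪gradf x, x - xs⟫ ∧ (⟪gradf x, x - xs⟫ = 0 → x ∈ Xstar))
    (α : ℕ → ℝ) (hα : ∀ n, 0 < α n)
    (s : ℕ → ℕ) (hs : ∀ n, s n ≤ n)
    (hαdiv : ¬ Summable α)
    (hW : Summable (fun n => α (n+1) * ∑ k ∈ Finset.Ico (s n) (n+1), α (k+1)))
    (hstend : Tendsto s atTop atTop)
    (x y : ℕ → EuclideanSpace ℝ (Fin d)) (hxy : ∀ n, x n = proj (y n))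
    (hrec : ∀ n, y (n + 1) = y n - α (n + 1) • gradf (x (s n)))
    (ε : ℝ) (hε : 0 < ε) (N : ℕ) :
    ∃ n, N ≤ n ∧ Metric.infDist (x n) Xstar < ε := by
  by_contra hcon
  push_neg at hcon
  -- hcon : ∀ n, N ≤ n → ε ≤ infDist (x n) Xstar
  obtain ⟨G0, hG0⟩ := hXc.exists_bound_of_continuousOn hgc.continuousOn
  set G := max G0 1 with hGdef
  have hG1 : (1:ℝ) ≤ G := le_max_right _ _
  have hGpos : (0:ℝ) < G := lt_of_lt_of_le one_pos hG1
  have hGb : ∀ z ∈ Xset, ‖gradf z‖ ≤ G := fun z hz => le_trans (hG0 z hz) (le_max_left _ _)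
  have hxX : ∀ n, x n ∈ Xset := fun n => (hxy n) ▸ hprojmem (y n)
  -- minimum of the coherence inner product on the bad set
  set S := Xset ∩ {z | ε ≤ Metric.infDist z Xstar} with hSdef
  have hScl : IsClosed {z : EuclideanSpace ℝ (Fin d) | ε ≤ Metric.infDist z Xstar} :=
    isClosed_le continuous_const (Metric.continuous_infDist_pt Xstar)
  have hScpt : IsCompact S := hXc.inter_right hScl
  have hSne : S.Nonempty := ⟨x N, hxX N, hcon N le_rfl⟩
  have hgcont : Continuous (fun z : EuclideanSpace ℝ (Fin d) => ⟪gradf z, z - xstar⟫) :=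
    hgc.inner (continuous_id.sub continuous_const)
  obtain ⟨z₀, hz₀S, hz₀min⟩ := hScpt.exists_isMinOn hSne hgcont.continuousOn
  set c := ⟪gradf z₀, z₀ - xstar⟫ with hcdef
  have hc0 : 0 ≤ c := (hVC z₀ hz₀S.1 xstar hxstar).1
  have hcpos : 0 < c := by
    rcases lt_or_eq_of_le hc0 with h | h
    · exact h
    · exfalso
      have hz₀star : z₀ ∈ Xstar := (hVC z₀ hz₀S.1 xstar hxstar).2 h.symm
      have := hz₀S.2
      simp only [Set.mem_setOf_eq, Metric.infDist_zero_of_mem hz₀star] at this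
      linarith
  have hcmin : ∀ z ∈ S, c ≤ ⟪gradf z, z - xstar⟫ := fun z hz => hz₀min hz
  obtain ⟨N₁, hN₁⟩ := eventually_atTop.1 (hstend.eventually_ge_atTop N)
  -- step quantities
  set T : ℕ → ℝ := fun n => ∑ k ∈ Finset.Ico (s n) n, α (k+1) with hTdef
  have hTnn : ∀ n, 0 ≤ T n := fun n => Finset.sum_nonneg fun k _ => (hα _).le
  -- bound on drift
  have hdrift : ∀ n, ‖x n - x (s n)‖ ≤ G * T n := by
    intro n
    have hy1 : y n - y (s n) = ∑ k ∈ Finset.Ico (s n) n, (y (k+1) - y k) :=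
      (helper_sum_telescope y (hs n)).symm
    have hy2 : ‖y n - y (s n)‖ ≤ G * T n := by
      rw [hy1]
      calc ‖∑ k ∈ Finset.Ico (s n) n, (y (k+1) - y k)‖
          ≤ ∑ k ∈ Finset.Ico (s n) n, ‖y (k+1) - y k‖ := norm_sum_le _ _
        _ ≤ ∑ k ∈ Finset.Ico (s n) n, α (k+1) * G := by
            refine Finset.sum_le_sum fun k _ => ?_
            have : y (k+1) - y k = -(α (k+1) • gradf (x (s k))) := by
              rw [hrec k]; abel
            rw [this, norm_neg, norm_smul, Real.norm_eq_abs, abs_of_pos (hα _)]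
            exact mul_le_mul_of_nonneg_left (hGb _ (hxX _)) (hα _).le
        _ = G * T n := by rw [hTdef, ← Finset.sum_mul]; ring
    calc ‖x n - x (s n)‖ = ‖proj (y n) - proj (y (s n))‖ := by rw [hxy, hxy]
      _ ≤ ‖y n - y (s n)‖ := helper_proj_nonexp hXconv hprojmem hprojmin _ _
      _ ≤ G * T n := hy2
  -- energy
  set E : ℕ → ℝ := fun n => Eaux proj xstar (y n) with hEdef
  have hEnn : ∀ n, 0 ≤ E n := fun n => helper_Eaux_nonneg hprojmin (hsub hxstar) (y n)
  set err : ℕ → ℝ := fun n => 2 * G^2 * (α (n+1) * ∑ k ∈ Finset.Ico (s n) (n+1), α (k+1))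
    with herrdef
  have herrnn : ∀ n, 0 ≤ err n := by
    intro n
    have h1 : 0 ≤ ∑ k ∈ Finset.Ico (s n) (n+1), α (k+1) :=
      Finset.sum_nonneg fun k _ => (hα _).le
    have h2 : (0:ℝ) ≤ 2 * G^2 := by positivity
    exact mul_nonneg h2 (mul_nonneg (hα _).le h1)
  have herrsum : Summable err := hW.mul_left _
  -- per-step inequality for n ≥ N₁
  have hstep : ∀ n, N₁ ≤ n → E (n+1) ≤ E n - 2*c*(α (n+1)) + err n := by
    intro n hn
    set v := gradf (x (s n)) with hvdef
    have h := helper_Eaux_step hXconv hprojmem hprojmin xstar (y n) v (α (n+1))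
    rw [← hrec n, ← hxy n] at h
    have hvG : ‖v‖ ≤ G := hGb _ (hxX _)
    have hvsq : ‖v‖^2 ≤ G^2 := by nlinarith [norm_nonneg v]
    have hsn : N ≤ s n := hN₁ n hn
    have hxsS : x (s n) ∈ S := ⟨hxX _, hcon _ hsn⟩
    have hbc : c ≤ ⟪v, x (s n) - xstar⟫ := hcmin _ hxsS
    have hdec : ⟪v, x n - xstar⟫ = ⟪v, x (s n) - xstar⟫ + ⟪v, x n - x (s n)⟫ := by
      rw [← inner_add_right]; congr 1; abel
    have h2 : -⟪v, x n - x (s n)⟫ ≤ ‖v‖ * ‖x n - x (s n)‖ := by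
      have h3 := real_inner_le_norm v (x (s n) - x n)
      have h4 : x (s n) - x n = -(x n - x (s n)) := by abel
      rw [h4, inner_neg_right, norm_neg] at h3
      linarith
    have h5 : ‖v‖ * ‖x n - x (s n)‖ ≤ G * (G * T n) :=
      mul_le_mul hvG (hdrift n) (norm_nonneg _) hGpos.le
    have h6 : c - G^2 * T n ≤ ⟪v, x n - xstar⟫ := by nlinarith
    -- assemble
    have h7 : E (n+1) ≤ E n - 2*(α (n+1))*(c - G^2 * T n) + (α (n+1))^2 * G^2 := by
      have hmul : 2*(α (n+1))*(c - G^2 * T n) ≤ 2*(α (n+1))*⟪v, x n - xstar⟫ :=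
        mul_le_mul_of_nonneg_left h6 (by linarith [hα (n+1)])
      have hmul2 : (α (n+1))^2 * ‖v‖^2 ≤ (α (n+1))^2 * G^2 :=
        mul_le_mul_of_nonneg_left hvsq (by positivity)
      calc E (n+1) ≤ E n - 2*(α (n+1))*⟪v, x n - xstar⟫ + (α (n+1))^2 * ‖v‖^2 := h
        _ ≤ E n - 2*(α (n+1))*(c - G^2 * T n) + (α (n+1))^2 * G^2 := by linarith
    have h8 : 2*(α (n+1))*(G^2 * T n) + (α (n+1))^2 * G^2 ≤ err n := by
      rw [herrdef]
      simp only
      rw [Finset.sum_Ico_succ_top (hs n)]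
      have hTn : (∑ k ∈ Finset.Ico (s n) n, α (k+1)) = T n := rfl
      rw [hTn]
      nlinarith [sq_nonneg (α (n+1)), hGpos, sq_nonneg G]
    linarith
  -- telescoping
  have hmain : ∀ m, E (N₁ + m) + 2*c*∑ i ∈ range m, α (N₁ + i + 1)
      ≤ E N₁ + ∑ i ∈ range m, err (N₁ + i) := by
    intro m
    induction m with
    | zero => simp
    | succ m ih =>
      have h1 := hstep (N₁ + m) (Nat.le_add_right _ _)
      rw [Finset.sum_range_succ, Finset.sum_range_succ]
      have he : N₁ + (m+1) = (N₁ + m) + 1 := by ring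
      rw [he]
      linarith
  have herrsum' : Summable fun i => err (N₁ + i) := by
    have := (summable_nat_add_iff N₁).2 herrsum
    simpa [Nat.add_comm] using this
  have hberr : ∀ m, ∑ i ∈ range m, err (N₁ + i) ≤ ∑' i, err (N₁ + i) :=
    fun m => Summable.sum_le_tsum _ (fun i _ => herrnn _) herrsum'
  -- partial sums of α bounded
  have hαb : ∀ m, ∑ i ∈ range m, α (N₁ + 1 + i) ≤ (E N₁ + ∑' i, err (N₁ + i)) / (2*c) := by
    intro m
    have h1 := hmain m
    have h2 := hEnn (N₁ + m)
    have h3 := hberr m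
    have heq : ∀ i, α (N₁ + i + 1) = α (N₁ + 1 + i) := by intro i; congr 1; ring
    rw [le_div_iff₀ (by positivity)]
    calc (∑ i ∈ range m, α (N₁ + 1 + i)) * (2*c)
        = 2*c*∑ i ∈ range m, α (N₁ + i + 1) := by
          rw [Finset.sum_congr rfl fun i _ => (heq i).symm]; ring
      _ ≤ E N₁ + ∑' i, err (N₁ + i) := by linarith
  have : Summable fun i => α (N₁ + 1 + i) :=
    summable_of_sum_range_le (fun n => (hα _).le) hαb
  have : Summable α := by
    rw [← summable_nat_add_iff (N₁ + 1)]
    simpa [Nat.add_comm] using this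
  exact hαdiv this


end Helpers

/-- **Proposition (recurrence of DAGD).** Under the constrained deterministic setup
with variational coherence, reciprocity and the delay/step-size assumption, DAGD
admits a subsequence `x_{n_k}` converging to the solution set `𝒳*`. -/

theorem dagd_subsequence_converges
    {d : ℕ} (Xset : Set (EuclideanSpace ℝ (Fin d)))
    (hXc : IsCompact Xset) (hXconv : Convex ℝ Xset) (hXne : Xset.Nonempty)
    (proj : EuclideanSpace ℝ (Fin d) → EuclideanSpace ℝ (Fin d))
    (hprojmem : ∀ y, proj y ∈ Xset)
    (hprojmin : ∀ y, ∀ x ∈ Xset, ‖y - proj y‖ ≤ ‖y - x‖)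
    (f : EuclideanSpace ℝ (Fin d) → ℝ)
    (gradf : EuclideanSpace ℝ (Fin d) → EuclideanSpace ℝ (Fin d))
    (hgrad : ∀ x, HasGradientAt f (gradf x) x)
    (L : NNReal) (hLip : LipschitzWith L gradf)
    (Xstar : Set (EuclideanSpace ℝ (Fin d)))
    (hXstar : Xstar = {x | x ∈ Xset ∧ ∀ z ∈ Xset, f x ≤ f z})
    (hstarne : Xstar.Nonempty)
    (hVC : ∀ x ∈ Xset, ∀ xstar ∈ Xstar,
      0 ≤ ⟪gradf x, x - xstar⟫ ∧ (⟪gradf x, x - xstar⟫ = 0 → x ∈ Xstar))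
    (hrecip : ∀ y : ℕ → EuclideanSpace ℝ (Fin d),
      Filter.Tendsto (fun n => energy proj Xstar (y n)) Filter.atTop (nhds 0) →
      Filter.Tendsto (fun n => Metric.infDist (proj (y n)) Xstar) Filter.atTop (nhds 0))
    (α : ℕ → ℝ) (hα : ∀ n, 0 < α n)
    (s : ℕ → ℕ) (hs : ∀ n, s n ≤ n)
    (hdelay : DelayStep s α)
    (x y : ℕ → EuclideanSpace ℝ (Fin d))
    (hxy : ∀ n, x n = proj (y n))
    (hrec : ∀ n, y (n + 1) = y n - α (n + 1) • gradf (x (s n))) :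
    ∃ nk : ℕ → ℕ, StrictMono nk ∧
      Filter.Tendsto (fun k => Metric.infDist (x (nk k)) Xstar) Filter.atTop (nhds 0)  := by
  obtain ⟨xstar, hxstar⟩ := hstarne
  have hsub : Xstar ⊆ Xset := by
    rw [hXstar]
    exact fun z hz => hz.1
  have hgc : Continuous gradf := hLip.continuous
  -- extract the three analytic facts from the delay/step-size assumption
  have hfacts : ¬ Summable α ∧
      Summable (fun n => α (n+1) * ∑ k ∈ Finset.Ico (s n) (n+1), α (k+1)) ∧
      Filter.Tendsto s Filter.atTop Filter.atTop := by
    rcases hdelay with ⟨D, hD, hsq, hdiv⟩ | ⟨K, hK, p, hp0, hp1, hdK, hformK⟩ |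
      ⟨K, hK, hdK, hformK⟩ | ⟨K, hK, q, hq, hdK, hformK⟩
    · exact ⟨hdiv, helper_case1_W hα hs D hD hsq, helper_s_tendsto_nat D hD⟩
    · exact ⟨helper_case2_div hformK, helper_case2_W hα hs hK hp0 hp1 hdK hformK,
        helper_s_tendsto hK hp0.le hdK⟩
    · have hd' : ∀ n : ℕ, (n:ℝ) - (s n : ℝ) ≤ K * (s n:ℝ)^(1:ℝ) := fun n => by
        rw [Real.rpow_one]; exact hdK n
      exact ⟨helper_case3_div hα hformK, helper_case3_W hα hs hK hdK hformK,
        helper_s_tendsto hK zero_le_one hd'⟩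
    · exact ⟨helper_case4_div hα hformK, helper_case4_W hα hs hK hq hdK hformK,
        helper_s_tendsto hK (by linarith) hdK⟩
  obtain ⟨hαdiv, hW, hstend⟩ := hfacts
  have key : ∀ k m : ℕ, ∃ n, m + 1 ≤ n ∧ Metric.infDist (x n) Xstar < 1/((k:ℝ)+1) := by
    intro k m
    exact helper_key Xset hXc hXconv proj hprojmem hprojmin gradf hgc Xstar hsub
      xstar hxstar hVC α hα s hs hαdiv hW hstend x y hxy hrec
      (1/((k:ℝ)+1)) (by positivity) (m+1)
  choose F hF1 hF2 using key
  set nk : ℕ → ℕ := fun k => Nat.rec (F 0 0) (fun k ih => F (k+1) ih) k with hnk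
  have hnk0 : nk 0 = F 0 0 := rfl
  have hnksucc : ∀ k, nk (k+1) = F (k+1) (nk k) := fun k => rfl
  have hmono : StrictMono nk := by
    apply strictMono_nat_of_lt_succ
    intro k
    rw [hnksucc]
    have := hF1 (k+1) (nk k)
    omega
  have hbound : ∀ k, Metric.infDist (x (nk k)) Xstar < 1/((k:ℝ)+1) := by
    intro k
    cases k with
    | zero => exact hF2 0 0
    | succ k => exact hF2 (k+1) (nk k)
  refine ⟨nk, hmono, ?_⟩
  apply squeeze_zero (fun k => Metric.infDist_nonneg) (fun k => (hbound k).le)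
  exact tendsto_one_div_add_atTop_nhds_zero_nat

end
end

section
/- For every x* ∈ 𝒳* and every y ∈ ℝ^d, the energy along the mean-field flow satisfies (d/dt) E_{x*}(P(t,y)) = −2⟨∇f(Π(P(t,y))), Π(P(t,y)) − x*⟩ ≤ 0 for all t ≥ 0. In particular, t ↦ E(P(t,y)) is nonincreasing, and it is strictly decreasing on any interval during which Π(P(t,y)) ∉ 𝒳*. -/
open scoped RealInnerProductSpace

noncomputable section

/-- `Eaux` rewritten as a difference of squared distances. -/
lemma Eaux_eq {d : ℕ} (proj : EuclideanSpace ℝ (Fin d) → EuclideanSpace ℝ (Fin d))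
    (xstar y : EuclideanSpace ℝ (Fin d)) :
    Eaux proj xstar y = ‖y - xstar‖ ^ 2 - ‖y - proj y‖ ^ 2 := by
  simp only [Eaux, norm_sub_sq_real, inner_sub_right]
  ring

set_option maxHeartbeats 1000000 in
/-- Variational inequality for the projection on a convex set. -/
lemma proj_var_ineq {d : ℕ} {Xset : Set (EuclideanSpace ℝ (Fin d))}
    (hXconv : Convex ℝ Xset)
    {proj : EuclideanSpace ℝ (Fin d) → EuclideanSpace ℝ (Fin d)}
    (hprojmem : ∀ y, proj y ∈ Xset)
    (hprojmin : ∀ y, ∀ x ∈ Xset, ‖y - proj y‖ ≤ ‖y - x‖)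
    (y : EuclideanSpace ℝ (Fin d)) :
    ∀ x ∈ Xset, ⟪y - proj y, x - proj y⟫ ≤ 0 := by
  haveI : Nonempty Xset := ⟨⟨proj y, hprojmem y⟩⟩
  have hb : BddBelow (Set.range fun w : Xset => ‖y - (w : EuclideanSpace ℝ (Fin d))‖) := by
    refine ⟨0, ?_⟩
    rintro r ⟨w, rfl⟩
    positivity
  have h1 : ‖y - proj y‖ = ⨅ w : Xset, ‖y - (w : EuclideanSpace ℝ (Fin d))‖ :=
    le_antisymm (le_ciInf fun w => hprojmin y w w.2) (ciInf_le hb ⟨proj y, hprojmem y⟩)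
  exact (norm_eq_iInf_iff_real_inner_le_zero hXconv (hprojmem y)).1 h1

/-- The projection is 1-Lipschitz. -/
lemma proj_lipschitz {d : ℕ} {Xset : Set (EuclideanSpace ℝ (Fin d))}
    (hXconv : Convex ℝ Xset)
    {proj : EuclideanSpace ℝ (Fin d) → EuclideanSpace ℝ (Fin d)}
    (hprojmem : ∀ y, proj y ∈ Xset)
    (hprojmin : ∀ y, ∀ x ∈ Xset, ‖y - proj y‖ ≤ ‖y - x‖)
    (a b : EuclideanSpace ℝ (Fin d)) :
    ‖proj a - proj b‖ ≤ ‖a - b‖ := by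
  have h1 := proj_var_ineq hXconv hprojmem hprojmin a (proj b) (hprojmem b)
  have h2 := proj_var_ineq hXconv hprojmem hprojmin b (proj a) (hprojmem a)
  set u := proj a - proj b with hu
  have key : ‖u‖ ^ 2 ≤ ⟪a - b, u⟫ := by
    have e1 : ⟪a - proj a, proj b - proj a⟫ ≤ 0 := h1
    have e2 : ⟪b - proj b, proj a - proj b⟫ ≤ 0 := h2
    have expand1 : ⟪a - proj a, proj b - proj a⟫
        = ⟪a, proj b⟫ - ⟪a, proj a⟫ - ⟪proj a, proj b⟫ + ‖proj a‖ ^ 2 := by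
      simp only [inner_sub_left, inner_sub_right, real_inner_self_eq_norm_sq]
      ring
    have expand2 : ⟪b - proj b, proj a - proj b⟫
        = ⟪b, proj a⟫ - ⟪b, proj b⟫ - ⟪proj a, proj b⟫ + ‖proj b‖ ^ 2 := by
      simp only [inner_sub_left, inner_sub_right, real_inner_self_eq_norm_sq]
      rw [real_inner_comm (proj b) (proj a)]
      ring
    have expand3 : ⟪a - b, u⟫
        = ⟪a, proj a⟫ - ⟪a, proj b⟫ - ⟪b, proj a⟫ + ⟪b, proj b⟫ := by
      simp only [hu, inner_sub_left, inner_sub_right]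
      ring
    have expand4 : ‖u‖ ^ 2 = ‖proj a‖ ^ 2 - 2 * ⟪proj a, proj b⟫ + ‖proj b‖ ^ 2 :=
      norm_sub_sq_real _ _
    linarith [e1, e2]
  have cs : ⟪a - b, u⟫ ≤ ‖a - b‖ * ‖u‖ := real_inner_le_norm _ _
  nlinarith [norm_nonneg u, norm_nonneg (a - b)]

/-- Two-sided bound on the first-order remainder of `Eaux`. -/
lemma Eaux_remainder_bounds {d : ℕ} {Xset : Set (EuclideanSpace ℝ (Fin d))}
    (hXconv : Convex ℝ Xset)
    {proj : EuclideanSpace ℝ (Fin d) → EuclideanSpace ℝ (Fin d)}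
    (hprojmem : ∀ y, proj y ∈ Xset)
    (hprojmin : ∀ y, ∀ x ∈ Xset, ‖y - proj y‖ ≤ ‖y - x‖)
    (xstar y h : EuclideanSpace ℝ (Fin d)) :
    0 ≤ Eaux proj xstar (y + h) - Eaux proj xstar y - ⟪(2:ℝ) • (proj y - xstar), h⟫ ∧
    Eaux proj xstar (y + h) - Eaux proj xstar y - ⟪(2:ℝ) • (proj y - xstar), h⟫
      ≤ 2 * ‖h‖ ^ 2 := by
  set p := proj y with hp
  set q := proj (y + h) with hq
  have key1 : ‖y + h - q‖ ≤ ‖y + h - p‖ := hprojmin (y + h) p (hprojmem y)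
  have key2 : ‖y - p‖ ≤ ‖y - q‖ := hprojmin y q (hprojmem (y + h))
  have key3 : ‖q - p‖ ≤ ‖h‖ := by
    have := proj_lipschitz hXconv hprojmem hprojmin (y + h) y
    simpa [hq, hp, add_sub_cancel_left] using this
  have key1sq : ‖y + h - q‖ ^ 2 ≤ ‖y + h - p‖ ^ 2 :=
    pow_le_pow_left₀ (norm_nonneg _) key1 2
  have key2sq : ‖y - p‖ ^ 2 ≤ ‖y - q‖ ^ 2 :=
    pow_le_pow_left₀ (norm_nonneg _) key2 2
  have e1 : ‖y + h - p‖ ^ 2 = ‖y + h‖ ^ 2 - 2 * (⟪y, p⟫ + ⟪h, p⟫) + ‖p‖ ^ 2 := by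
    rw [norm_sub_sq_real, inner_add_left]
  have e2 : ‖y + h - q‖ ^ 2 = ‖y + h‖ ^ 2 - 2 * (⟪y, q⟫ + ⟪h, q⟫) + ‖q‖ ^ 2 := by
    rw [norm_sub_sq_real, inner_add_left]
  have e3 : ‖y - p‖ ^ 2 = ‖y‖ ^ 2 - 2 * ⟪y, p⟫ + ‖p‖ ^ 2 := norm_sub_sq_real _ _
  have e4 : ‖y - q‖ ^ 2 = ‖y‖ ^ 2 - 2 * ⟪y, q⟫ + ‖q‖ ^ 2 := norm_sub_sq_real _ _
  have cs : ⟪h, q - p⟫ ≤ ‖h‖ * ‖q - p‖ := real_inner_le_norm _ _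
  have cs' : ⟪h, q - p⟫ = ⟪h, q⟫ - ⟪h, p⟫ := inner_sub_right _ _ _
  have hb : ‖h‖ * ‖q - p‖ ≤ ‖h‖ ^ 2 := by
    have := mul_le_mul_of_nonneg_left key3 (norm_nonneg h)
    nlinarith
  have eΔ : Eaux proj xstar (y + h) - Eaux proj xstar y
      - ⟪(2:ℝ) • (p - xstar), h⟫
      = ‖p‖ ^ 2 - ‖q‖ ^ 2 + 2 * ⟪y, q⟫ + 2 * ⟪h, q⟫ - 2 * ⟪y, p⟫ - 2 * ⟪h, p⟫ := by
    simp only [Eaux, ← hq, ← hp, inner_sub_right, inner_add_left, real_inner_smul_left,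
      inner_sub_left]
    rw [real_inner_comm p h, real_inner_comm xstar h]
    ring
  constructor
  · rw [eΔ]; linarith
  · rw [eΔ]; linarith

/-- Gradient of the energy. -/
lemma hasGradientAt_Eaux {d : ℕ} {Xset : Set (EuclideanSpace ℝ (Fin d))}
    (hXconv : Convex ℝ Xset)
    {proj : EuclideanSpace ℝ (Fin d) → EuclideanSpace ℝ (Fin d)}
    (hprojmem : ∀ y, proj y ∈ Xset)
    (hprojmin : ∀ y, ∀ x ∈ Xset, ‖y - proj y‖ ≤ ‖y - x‖)
    (xstar y : EuclideanSpace ℝ (Fin d)) :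
    HasGradientAt (Eaux proj xstar) ((2:ℝ) • (proj y - xstar)) y := by
  rw [hasGradientAt_iff_isLittleO_nhds_zero, Asymptotics.isLittleO_iff]
  intro c hc
  filter_upwards [Metric.closedBall_mem_nhds (0 : EuclideanSpace ℝ (Fin d))
    (half_pos hc)] with h hh
  rw [Metric.mem_closedBall, dist_zero_right] at hh
  obtain ⟨hl, hu⟩ := Eaux_remainder_bounds hXconv hprojmem hprojmin xstar y h
  rw [Real.norm_eq_abs, abs_of_nonneg hl]
  nlinarith [norm_nonneg h]

/-- **Lemma (energy decrease along the mean dynamics, part 1).** For every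
`x* ∈ 𝒳*` and `y`, `(d/dt) E_{x*}(P(t,y)) = −2⟨∇f(Π(P(t,y))), Π(P(t,y)) − x*⟩ ≤ 0`;
in particular `t ↦ E(P(t,y))` is nonincreasing on `[0,∞)`, and strictly decreasing
on any interval during which `Π(P(t,y)) ∉ 𝒳*`. -/
theorem energy_nonincreasing_along_flow
    {d : ℕ} (Xset : Set (EuclideanSpace ℝ (Fin d)))
    (hXc : IsCompact Xset) (hXconv : Convex ℝ Xset) (hXne : Xset.Nonempty)
    (proj : EuclideanSpace ℝ (Fin d) → EuclideanSpace ℝ (Fin d))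
    (hprojmem : ∀ y, proj y ∈ Xset)
    (hprojmin : ∀ y, ∀ x ∈ Xset, ‖y - proj y‖ ≤ ‖y - x‖)
    (f : EuclideanSpace ℝ (Fin d) → ℝ)
    (gradf : EuclideanSpace ℝ (Fin d) → EuclideanSpace ℝ (Fin d))
    (hgrad : ∀ x, HasGradientAt f (gradf x) x)
    (L : NNReal) (hLip : LipschitzWith L gradf)
    (Xstar : Set (EuclideanSpace ℝ (Fin d)))
    (hXstar : Xstar = {x | x ∈ Xset ∧ ∀ z ∈ Xset, f x ≤ f z})
    (hstarne : Xstar.Nonempty)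
    (hVC : ∀ x ∈ Xset, ∀ xstar ∈ Xstar,
      0 ≤ ⟪gradf x, x - xstar⟫ ∧ (⟪gradf x, x - xstar⟫ = 0 → x ∈ Xstar))
    (P : ℝ → EuclideanSpace ℝ (Fin d) → EuclideanSpace ℝ (Fin d))
    (hP0 : ∀ y, P 0 y = y)
    (hPderiv : ∀ y, ∀ t : ℝ, 0 ≤ t →
      HasDerivAt (fun τ => P τ y) (-(gradf (proj (P t y)))) t)
    :
    (∀ xstar ∈ Xstar, ∀ y, ∀ t : ℝ, 0 ≤ t →
      HasDerivAt (fun τ => Eaux proj xstar (P τ y))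
        (-2 * ⟪gradf (proj (P t y)), proj (P t y) - xstar⟫) t ∧
      -2 * ⟪gradf (proj (P t y)), proj (P t y) - xstar⟫ ≤ 0) ∧
    (∀ y, AntitoneOn (fun t => energy proj Xstar (P t y)) (Set.Ici (0 : ℝ))) ∧
    (∀ y, ∀ t₁ t₂ : ℝ, 0 ≤ t₁ → t₁ < t₂ →
      (∀ t ∈ Set.Icc t₁ t₂, proj (P t y) ∉ Xstar) →
      energy proj Xstar (P t₂ y) < energy proj Xstar (P t₁ y)) := by
  haveI : Nonempty Xstar := hstarne.to_subtype
  -- Part 1: derivative of the energy along the flow.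
  have key : ∀ xstar ∈ Xstar, ∀ y, ∀ t : ℝ, 0 ≤ t →
      HasDerivAt (fun τ => Eaux proj xstar (P τ y))
        (-2 * ⟪gradf (proj (P t y)), proj (P t y) - xstar⟫) t := by
    intro xstar hxs y t ht
    have hg := hasGradientAt_Eaux hXconv hprojmem hprojmin xstar (P t y)
    have hcomp := hg.hasFDerivAt.comp_hasDerivAt t (hPderiv y t ht)
    refine hcomp.congr_deriv (Eq.symm ?_)
    rw [InnerProductSpace.toDual_apply_apply, real_inner_smul_left, inner_neg_right,
      real_inner_comm]
    ring
  have keyle : ∀ xstar ∈ Xstar, ∀ y, ∀ t : ℝ, 0 ≤ t →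
      -2 * ⟪gradf (proj (P t y)), proj (P t y) - xstar⟫ ≤ 0 := by
    intro xstar hxs y t ht
    have := (hVC (proj (P t y)) (hprojmem _) xstar hxs).1
    linarith
  -- Monotonicity of each `Eaux` along the flow.
  have mono : ∀ xstar ∈ Xstar, ∀ y, ∀ t₁ t₂ : ℝ, 0 ≤ t₁ → t₁ ≤ t₂ →
      Eaux proj xstar (P t₂ y) ≤ Eaux proj xstar (P t₁ y) := by
    intro xstar hxs y t₁ t₂ ht₁ h12
    have hanti : AntitoneOn (fun τ => Eaux proj xstar (P τ y)) (Set.Icc t₁ t₂) := by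
      refine antitoneOn_of_deriv_nonpos (convex_Icc t₁ t₂) ?_ ?_ ?_
      · intro t htm
        exact (key xstar hxs y t (le_trans ht₁ htm.1)).continuousAt.continuousWithinAt
      · intro t htm
        rw [interior_Icc] at htm
        exact (key xstar hxs y t (le_trans ht₁ htm.1.le)).differentiableAt.differentiableWithinAt
      · intro t htm
        rw [interior_Icc] at htm
        have ht : 0 ≤ t := le_trans ht₁ htm.1.le
        rw [(key xstar hxs y t ht).deriv]
        exact keyle xstar hxs y t ht
    exact hanti (Set.left_mem_Icc.2 h12) (Set.right_mem_Icc.2 h12) h12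
  -- Strict monotonicity when the projected flow stays outside `Xstar`.
  have smono : ∀ xstar ∈ Xstar, ∀ y, ∀ t₁ t₂ : ℝ, 0 ≤ t₁ → t₁ < t₂ →
      (∀ t ∈ Set.Icc t₁ t₂, proj (P t y) ∉ Xstar) →
      Eaux proj xstar (P t₂ y) < Eaux proj xstar (P t₁ y) := by
    intro xstar hxs y t₁ t₂ ht₁ h12 hout
    have hanti : StrictAntiOn (fun τ => Eaux proj xstar (P τ y)) (Set.Icc t₁ t₂) := by
      refine strictAntiOn_of_deriv_neg (convex_Icc t₁ t₂) ?_ ?_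
      · intro t htm
        exact (key xstar hxs y t (le_trans ht₁ htm.1)).continuousAt.continuousWithinAt
      · intro t htm
        rw [interior_Icc] at htm
        have ht : 0 ≤ t := le_trans ht₁ htm.1.le
        rw [(key xstar hxs y t ht).deriv]
        have hvc := hVC (proj (P t y)) (hprojmem _) xstar hxs
        have hne : ⟪gradf (proj (P t y)), proj (P t y) - xstar⟫ ≠ 0 := by
          intro h0
          exact hout t ⟨htm.1.le, htm.2.le⟩ (hvc.2 h0)
        have hpos : 0 < ⟪gradf (proj (P t y)), proj (P t y) - xstar⟫ :=
          lt_of_le_of_ne hvc.1 (Ne.symm hne)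
        linarith
    exact hanti (Set.left_mem_Icc.2 h12.le) (Set.right_mem_Icc.2 h12.le) h12
  -- Lower bound for the infimum.
  have bdd : ∀ z : EuclideanSpace ℝ (Fin d),
      BddBelow (Set.range fun xs : Xstar => Eaux proj (xs : EuclideanSpace ℝ (Fin d)) z) := by
    intro z
    refine ⟨-‖z - proj z‖ ^ 2, ?_⟩
    rintro r ⟨xs, rfl⟩
    show -‖z - proj z‖ ^ 2 ≤ Eaux proj (xs : EuclideanSpace ℝ (Fin d)) z
    rw [Eaux_eq]
    nlinarith [sq_nonneg ‖z - (xs : EuclideanSpace ℝ (Fin d))‖]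
  refine ⟨fun xstar hxs y t ht => ⟨key xstar hxs y t ht, keyle xstar hxs y t ht⟩, ?_, ?_⟩
  · -- Antitone part.
    intro y t₁ ht₁ t₂ ht₂ h12
    refine le_ciInf fun xs => ?_
    exact le_trans (ciInf_le (bdd _) xs) (mono xs xs.2 y t₁ t₂ ht₁ h12)
  · -- Strict part.
    intro y t₁ t₂ ht₁ h12 hout
    -- `Xstar` is compact.
    have hfc : Continuous f :=
      continuous_iff_continuousAt.2 fun x => (hgrad x).hasFDerivAt.differentiableAt.continuousAt
    have hclosed : IsClosed Xstar := by
      rw [hXstar]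
      have : {x | x ∈ Xset ∧ ∀ z ∈ Xset, f x ≤ f z}
          = Xset ∩ ⋂ z ∈ Xset, {x | f x ≤ f z} := by
        ext x; simp [Set.mem_iInter]
      rw [this]
      exact hXc.isClosed.inter (isClosed_biInter fun z _ => isClosed_le hfc continuous_const)
    have hsub : Xstar ⊆ Xset := by rw [hXstar]; exact fun x hx => hx.1
    have hcomp : IsCompact Xstar := hXc.of_isClosed_subset hclosed hsub
    -- Attain the infimum at time `t₁`.
    have hcont : ContinuousOn (fun xs => Eaux proj xs (P t₁ y)) Xstar := by
      have : Continuous fun xs : EuclideanSpace ℝ (Fin d) => Eaux proj xs (P t₁ y) := by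
        have he : (fun xs : EuclideanSpace ℝ (Fin d) => Eaux proj xs (P t₁ y))
            = fun xs => ‖P t₁ y - xs‖ ^ 2 - ‖P t₁ y - proj (P t₁ y)‖ ^ 2 := by
          funext xs; rw [Eaux_eq]
        rw [he]
        exact (((continuous_const.sub continuous_id).norm.pow 2).sub continuous_const)
      exact this.continuousOn
    obtain ⟨x₀, hx₀, hmin⟩ := hcomp.exists_isMinOn hstarne hcont
    have h1 : energy proj Xstar (P t₁ y) = Eaux proj x₀ (P t₁ y) := by
      refine le_antisymm (ciInf_le (bdd _) ⟨x₀, hx₀⟩) (le_ciInf fun xs => hmin xs.2)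
    have h2 : energy proj Xstar (P t₂ y) ≤ Eaux proj x₀ (P t₂ y) :=
      ciInf_le (bdd _) ⟨x₀, hx₀⟩
    have h3 := smono x₀ hx₀ y t₁ t₂ ht₁ h12 hout
    rw [h1]
    exact lt_of_le_of_lt h2 h3

end
end

section
/- Under the constrained deterministic setup and the delay/step-size assumption, the drift term of DAGD vanishes: the vectors b_n := ∇f(x_{s(n)}) − ∇f(x_n) satisfy ‖b_n‖₂ ≤ C₃·V_max·∑_{r=s(n)}^{n−1} α_{r+1}, where C₃ is the Lipschitz constant of ∇f and V_max := sup_{x∈𝒳} ‖∇f(x)‖₂, and consequently lim_{n→∞} ‖b_n‖₂ = 0. -/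
open scoped RealInnerProductSpace

noncomputable section

open Filter Finset

section AuxLemmas

lemma aux_log_lb {x : ℝ} (hx : 0 < x) : 1 - 1/x ≤ Real.log x := by
  have h := Real.log_le_sub_one_of_pos (inv_pos.2 hx)
  rw [Real.log_inv] at h
  have : (1:ℝ)/x = x⁻¹ := one_div x
  linarith

lemma aux_log_gt_one {z : ℝ} (hz : 3 ≤ z) : 1 < Real.log z := by
  have he : Real.exp 1 < 3 := lt_trans Real.exp_one_lt_d9 (by norm_num)
  calc 1 = Real.log (Real.exp 1) := (Real.log_exp 1).symm
    _ < Real.log z := Real.log_lt_log (Real.exp_pos 1) (lt_of_lt_of_le he hz)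

lemma aux_s_tendsto (s : ℕ → ℕ) (φ : ℕ → ℝ) (h : ∀ n : ℕ, (n : ℝ) ≤ φ (s n)) :
    Tendsto s atTop atTop := by
  rw [tendsto_atTop]
  intro M
  set B := (Finset.range M).sup (fun m => Nat.ceil (φ m)) with hB
  filter_upwards [eventually_ge_atTop (B+1)] with n hn
  by_contra hlt
  push_neg at hlt
  have h2 : n ≤ Nat.ceil (φ (s n)) := by
    have h3 := (h n).trans (Nat.le_ceil (φ (s n)))
    exact_mod_cast h3
  have h3 : Nat.ceil (φ (s n)) ≤ B :=
    Finset.le_sup (f := fun m => Nat.ceil (φ m)) (Finset.mem_range.2 hlt)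
  omega

lemma aux_window (α : ℕ → ℝ) (hα : ∀ n, 0 ≤ α n) (h0 : Tendsto α atTop (nhds 0))
    (s : ℕ → ℕ) (D : ℕ) (hD : ∀ n, n - s n ≤ D) :
    Tendsto (fun n => ∑ r ∈ Finset.Ico (s n) n, α (r+1)) atTop (nhds 0) := by
  rw [Metric.tendsto_atTop] at h0 ⊢
  intro ε hε
  obtain ⟨N, hN⟩ := h0 (ε/(D+1)) (by positivity)
  refine ⟨N + D, fun n hn => ?_⟩
  have hsum : ∑ r ∈ Finset.Ico (s n) n, α (r+1) ≤ (Finset.Ico (s n) n).card • (ε/(D+1)) := by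
    refine Finset.sum_le_card_nsmul _ _ _ (fun r hr => ?_)
    rw [Finset.mem_Ico] at hr
    have hr1 : N ≤ r + 1 := by have := hD n; omega
    have := hN (r+1) hr1
    rw [Real.dist_eq, sub_zero] at this
    exact (le_abs_self _).trans this.le
  have hcard : (Finset.Ico (s n) n).card ≤ D := by
    rw [Nat.card_Ico]; exact hD n
  have hnn : 0 ≤ ∑ r ∈ Finset.Ico (s n) n, α (r+1) :=
    Finset.sum_nonneg (fun r _ => hα _)
  have hD1 : (0:ℝ) < D + 1 := by positivity
  rw [Real.dist_eq, sub_zero, abs_of_nonneg hnn]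
  calc ∑ r ∈ Finset.Ico (s n) n, α (r+1) ≤ (Finset.Ico (s n) n).card • (ε/(D+1)) := hsum
    _ ≤ D * (ε/(D+1)) := by
        rw [nsmul_eq_mul]
        exact mul_le_mul_of_nonneg_right (by exact_mod_cast hcard) (by positivity)
    _ = ((D:ℝ)/(D+1)) * ε := by ring
    _ < 1 * ε := by
        refine mul_lt_mul_of_pos_right ?_ hε
        rw [div_lt_one hD1]; linarith
    _ = ε := one_mul ε

lemma aux_loglog_step {r : ℕ} (hr : 3 ≤ r) :
    1/(((r:ℝ)+1) * Real.log ((r:ℝ)+1)) ≤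
      Real.log (Real.log ((r:ℝ)+1)) - Real.log (Real.log (r:ℝ)) := by
  have hr3 : (3:ℝ) ≤ (r:ℝ) := by exact_mod_cast hr
  have ha1 : 1 < Real.log r := aux_log_gt_one hr3
  set a := Real.log (r:ℝ) with hadef
  set b := Real.log ((r:ℝ)+1) with hbdef
  have hab : a < b := Real.log_lt_log (by linarith) (by linarith)
  have ha : 0 < a := by linarith
  have hb : 0 < b := by linarith
  have h1 : 1/((r:ℝ)+1) ≤ b - a := by
    have heq : b - a = Real.log (((r:ℝ)+1)/r) := by
      rw [hadef, hbdef, ← Real.log_div (by linarith) (by linarith)]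
    have h2 := aux_log_lb (x := ((r:ℝ)+1)/r) (by positivity)
    have h3 : 1 - 1/(((r:ℝ)+1)/r) = 1/((r:ℝ)+1) := by
      field_simp
      ring
    rw [heq]; rw [h3] at h2; exact h2
  have h4 := aux_log_lb (x := b/a) (by positivity)
  have h5 : 1 - 1/(b/a) = (b-a)/b := by field_simp
  have h6 : Real.log (b/a) = Real.log b - Real.log a := Real.log_div hb.ne' ha.ne'
  calc 1/(((r:ℝ)+1) * b) = (1/((r:ℝ)+1))/b := by rw [div_div]
    _ ≤ (b-a)/b := by gcongr
    _ ≤ Real.log (b/a) := by linarith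
    _ = Real.log b - Real.log a := h6

lemma aux_proj_nonexp {F : Type*} [NormedAddCommGroup F] [InnerProductSpace ℝ F]
    (Xset : Set F) (hXconv : Convex ℝ Xset)
    (proj : F → F)
    (hprojmem : ∀ y, proj y ∈ Xset)
    (hprojmin : ∀ y, ∀ x ∈ Xset, ‖y - proj y‖ ≤ ‖y - x‖) :
    ∀ u v, ‖proj u - proj v‖ ≤ ‖u - v‖ := by
  haveI : Nonempty Xset := ⟨⟨proj 0, hprojmem 0⟩⟩
  have hVI : ∀ u, ∀ w ∈ Xset, ⟪u - proj u, w - proj u⟫ ≤ 0 := by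
    intro u
    have hbdd : BddBelow (Set.range fun w : Xset => ‖u - (w : F)‖) := by
      refine ⟨0, ?_⟩; rintro z ⟨w, rfl⟩; exact norm_nonneg _
    have hinf : ‖u - proj u‖ = ⨅ w : Xset, ‖u - (w : F)‖ := by
      refine le_antisymm (le_ciInf fun w => hprojmin u w w.2) ?_
      exact ciInf_le hbdd ⟨proj u, hprojmem u⟩
    exact (norm_eq_iInf_iff_real_inner_le_zero hXconv (hprojmem u)).1 hinf
  intro u v
  set a := proj u; set b := proj v
  have h1 : ⟪u - a, b - a⟫ ≤ 0 := hVI u b (hprojmem v)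
  have h2 : ⟪v - b, a - b⟫ ≤ 0 := hVI v a (hprojmem u)
  have h1' : ⟪a - u, a - b⟫ ≤ 0 := by
    have e : a - u = -(u - a) := by abel
    rw [e, inner_neg_left]
    have e2 : a - b = -(b - a) := by abel
    rw [e2, inner_neg_right, neg_neg]
    exact h1
  have key : ‖a - b‖^2 ≤ ⟪u - v, a - b⟫ := by
    have e1 : ‖a - b‖^2 = ⟪a - b, a - b⟫ := (real_inner_self_eq_norm_sq _).symm
    have edecomp : a - b = (a - u) + (u - v) + (v - b) := by abel
    have e2 : ⟪a - b, a - b⟫ = ⟪a - u, a - b⟫ + ⟪u - v, a - b⟫ + ⟪v - b, a - b⟫ := by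
      nth_rewrite 1 [edecomp]
      rw [inner_add_left, inner_add_left]
    rw [e1, e2]; linarith
  have hcs : ⟪u - v, a - b⟫ ≤ ‖u - v‖ * ‖a - b‖ := real_inner_le_norm _ _
  rcases eq_or_lt_of_le (norm_nonneg (a - b)) with h0 | h0
  · calc ‖a - b‖ = 0 := h0.symm
      _ ≤ ‖u - v‖ := norm_nonneg _
  · have h3 : ‖a - b‖ * ‖a - b‖ ≤ ‖u - v‖ * ‖a - b‖ := by
      have := key.trans hcs; rwa [pow_two] at this
    exact le_of_mul_le_mul_right h3 h0

lemma aux_case1 (α : ℕ → ℝ) (hα : ∀ n, 0 < α n)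
    (hsq : Summable (fun n => (α n)^2)) :
    Tendsto α atTop (nhds 0) := by
  have h2 := hsq.tendsto_atTop_zero
  have h3 : Tendsto (fun n => Real.sqrt ((α n)^2)) atTop (nhds 0) := by
    have := (Real.continuous_sqrt.tendsto 0).comp h2
    simpa [Function.comp_def] using this
  have he : (fun n => Real.sqrt ((α n)^2)) = α := funext fun n => Real.sqrt_sq (hα n).le
  rwa [he] at h3

lemma aux_case2 (α : ℕ → ℝ) (hα : ∀ n, 0 < α n) (s : ℕ → ℕ) (hs : ∀ n, s n ≤ n)
    (K : ℝ) (hK : 0 < K) (p : ℝ) (hp0 : 0 < p) (hp1 : p < 1)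
    (hKs : ∀ n : ℕ, (n:ℝ) - (s n : ℝ) ≤ K * (s n : ℝ)^p)
    (hαf : ∀ n : ℕ, 1 ≤ n → α n = 1/n) :
    Tendsto (fun n => ∑ r ∈ Finset.Ico (s n) n, α (r+1)) atTop (nhds 0) := by
  have hst : Tendsto s atTop atTop :=
    aux_s_tendsto s (fun m => (m:ℝ) + K*(m:ℝ)^p) (fun n => by
      have := hKs n; linarith)
  have hbnd : Tendsto (fun n => K * ((s n : ℝ))^(p-1)) atTop (nhds 0) := by
    have h2 : Tendsto (fun x : ℝ => x^(-(1-p))) atTop (nhds 0) :=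
      tendsto_rpow_neg_atTop (by linarith)
    have h3 : Tendsto (fun m : ℕ => ((m:ℝ))^(p-1)) atTop (nhds 0) := by
      have := h2.comp (tendsto_natCast_atTop_atTop (R := ℝ))
      simpa [Function.comp_def, neg_sub] using this
    have h4 := (h3.comp hst).const_mul K
    simpa using h4
  refine squeeze_zero' (Eventually.of_forall fun n =>
    Finset.sum_nonneg fun r _ => (hα _).le) ?_ hbnd
  filter_upwards [hst.eventually_ge_atTop 1] with n hn1
  have hm0 : (0:ℝ) < (s n : ℝ) := by exact_mod_cast hn1
  have hterm : ∀ r ∈ Finset.Ico (s n) n, α (r+1) ≤ 1/((s n : ℝ)+1) := by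
    intro r hr
    rw [Finset.mem_Ico] at hr
    rw [hαf (r+1) (by omega)]
    have h1 : ((s n : ℝ)+1) ≤ ((r+1 : ℕ) : ℝ) := by
      push_cast; linarith [show (s n : ℝ) ≤ (r:ℝ) from by exact_mod_cast hr.1]
    exact one_div_le_one_div_of_le (by positivity) h1
  calc ∑ r ∈ Finset.Ico (s n) n, α (r+1)
      ≤ (Finset.Ico (s n) n).card • (1/((s n : ℝ)+1)) :=
        Finset.sum_le_card_nsmul _ _ _ hterm
    _ = ((n - s n : ℕ) : ℝ) * (1/((s n : ℝ)+1)) := by rw [nsmul_eq_mul, Nat.card_Ico]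
    _ ≤ (K * (s n : ℝ)^p) * (1/((s n : ℝ)+1)) := by
        refine mul_le_mul_of_nonneg_right ?_ (by positivity)
        rw [Nat.cast_sub (hs n)]; exact hKs n
    _ ≤ K * ((s n : ℝ))^(p-1) := by
        rw [Real.rpow_sub hm0, Real.rpow_one, mul_one_div, mul_div_assoc]
        refine mul_le_mul_of_nonneg_left ?_ hK.le
        refine div_le_div_of_nonneg_left ?_ hm0 (by linarith) |>.trans_eq rfl
        positivity

lemma aux_case3 (α : ℕ → ℝ) (hα : ∀ n, 0 < α n) (s : ℕ → ℕ) (hs : ∀ n, s n ≤ n)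
    (K : ℝ) (hK : 0 < K)
    (hKs : ∀ n : ℕ, (n:ℝ) - (s n : ℝ) ≤ K * (s n : ℝ))
    (hαf : ∀ n : ℕ, 2 ≤ n → α n = 1/(n * Real.log n)) :
    Tendsto (fun n => ∑ r ∈ Finset.Ico (s n) n, α (r+1)) atTop (nhds 0) := by
  have hst : Tendsto s atTop atTop :=
    aux_s_tendsto s (fun m => (1+K)*(m:ℝ)) (fun n => by
      have := hKs n; linarith)
  have hbnd : Tendsto (fun n => K * (1/Real.log ((s n : ℝ)+1))) atTop (nhds 0) := by
    have hT : Tendsto (fun m : ℕ => Real.log ((m:ℝ)+1)) atTop atTop :=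
      Real.tendsto_log_atTop.comp (tendsto_atTop_add_const_right _ 1 tendsto_natCast_atTop_atTop)
    have h4 := ((hT.inv_tendsto_atTop).comp hst).const_mul K
    simpa [Function.comp, one_div] using h4
  refine squeeze_zero' (Eventually.of_forall fun n =>
    Finset.sum_nonneg fun r _ => (hα _).le) ?_ hbnd
  filter_upwards [hst.eventually_ge_atTop 2] with n hn2
  have hm2 : (2:ℝ) ≤ (s n : ℝ) := by exact_mod_cast hn2
  set L : ℝ := Real.log ((s n : ℝ)+1) with hL
  have hL1 : 1 < L := aux_log_gt_one (by linarith)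
  have hL0 : 0 < L := by linarith
  have hterm : ∀ r ∈ Finset.Ico (s n) n, α (r+1) ≤ 1/(((s n : ℝ)+1) * L) := by
    intro r hr
    rw [Finset.mem_Ico] at hr
    have hr2 : (s n : ℝ) ≤ (r : ℝ) := by exact_mod_cast hr.1
    rw [hαf (r+1) (by omega)]
    push_cast
    have hlogmono : L ≤ Real.log ((r:ℝ)+1) :=
      Real.log_le_log (by linarith) (by linarith)
    refine one_div_le_one_div_of_le (by positivity) ?_
    exact mul_le_mul (by linarith) hlogmono hL0.le (by linarith)
  calc ∑ r ∈ Finset.Ico (s n) n, α (r+1)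
      ≤ (Finset.Ico (s n) n).card • (1/(((s n : ℝ)+1) * L)) :=
        Finset.sum_le_card_nsmul _ _ _ hterm
    _ = ((n - s n : ℕ) : ℝ) * (1/(((s n : ℝ)+1) * L)) := by rw [nsmul_eq_mul, Nat.card_Ico]
    _ ≤ (K * (s n : ℝ)) * (1/(((s n : ℝ)+1) * L)) := by
        refine mul_le_mul_of_nonneg_right ?_ (by positivity)
        rw [Nat.cast_sub (hs n)]; exact hKs n
    _ ≤ K * (1/L) := by
        rw [mul_one_div, mul_one_div, mul_div_assoc]
        refine mul_le_mul_of_nonneg_left ?_ hK.le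
        rw [← one_div, div_le_div_iff₀ (by positivity) hL0]
        nlinarith

lemma aux_case4 (α : ℕ → ℝ) (hα : ∀ n, 0 < α n) (s : ℕ → ℕ) (hs : ∀ n, s n ≤ n)
    (K : ℝ) (hK : 0 < K) (q : ℝ) (hq : 1 ≤ q)
    (hKs : ∀ n : ℕ, (n:ℝ) - (s n : ℝ) ≤ K * (s n : ℝ)^q)
    (hαf : ∀ n : ℕ, 3 ≤ n → α n = 1/(n * Real.log n * Real.log (Real.log n))) :
    Tendsto (fun n => ∑ r ∈ Finset.Ico (s n) n, α (r+1)) atTop (nhds 0) := by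
  set C : ℝ := Real.log (q + Real.log (1+K)) with hC
  have hK1 : (0:ℝ) < Real.log (1+K) := Real.log_pos (by linarith)
  have hC0 : 0 ≤ C := Real.log_nonneg (by linarith)
  have hst : Tendsto s atTop atTop :=
    aux_s_tendsto s (fun m => (m:ℝ) + K*(m:ℝ)^q) (fun n => by
      have := hKs n; linarith)
  set g : ℕ → ℝ := fun k => Real.log (Real.log (k:ℝ)) with hg
  have hbnd : Tendsto (fun n => C * (1/Real.log (Real.log ((s n : ℝ)+1)))) atTop (nhds 0) := by
    have hT : Tendsto (fun m : ℕ => Real.log (Real.log ((m:ℝ)+1))) atTop atTop :=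
      Real.tendsto_log_atTop.comp (Real.tendsto_log_atTop.comp
        (tendsto_atTop_add_const_right _ 1 tendsto_natCast_atTop_atTop))
    have h4 := ((hT.inv_tendsto_atTop).comp hst).const_mul C
    simpa [Function.comp, one_div] using h4
  refine squeeze_zero' (Eventually.of_forall fun n =>
    Finset.sum_nonneg fun r _ => (hα _).le) ?_ hbnd
  filter_upwards [hst.eventually_ge_atTop 3] with n hn3
  have hm3 : (3:ℝ) ≤ (s n : ℝ) := by exact_mod_cast hn3
  have hn3' : (3:ℝ) ≤ (n : ℝ) := le_trans hm3 (by exact_mod_cast hs n)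
  set L : ℝ := Real.log (Real.log ((s n : ℝ)+1)) with hLdef
  have hlogm : 1 < Real.log ((s n : ℝ)+1) := aux_log_gt_one (by linarith)
  have hL0 : 0 < L := Real.log_pos hlogm
  have hterm : ∀ r ∈ Finset.Ico (s n) n, α (r+1) ≤ (g (r+1) - g r) * (1/L) := by
    intro r hr
    rw [Finset.mem_Ico] at hr
    have hr3 : 3 ≤ r := le_trans hn3 hr.1
    have hr3' : (3:ℝ) ≤ (r:ℝ) := by exact_mod_cast hr3
    have hsr : (s n : ℝ) ≤ (r : ℝ) := by exact_mod_cast hr.1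
    have hlogr1 : 1 < Real.log ((r:ℝ)+1) := aux_log_gt_one (by linarith)
    have hLL : L ≤ Real.log (Real.log ((r:ℝ)+1)) := by
      refine Real.log_le_log (by linarith) (Real.log_le_log (by linarith) (by linarith))
    have hLLpos : 0 < Real.log (Real.log ((r:ℝ)+1)) := lt_of_lt_of_le hL0 hLL
    rw [hαf (r+1) (by omega)]
    push_cast
    have heq : (1:ℝ)/(((r:ℝ)+1) * Real.log ((r:ℝ)+1) * Real.log (Real.log ((r:ℝ)+1)))
        = (1/(((r:ℝ)+1) * Real.log ((r:ℝ)+1))) * (1/Real.log (Real.log ((r:ℝ)+1))) := by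
      rw [one_div, one_div, one_div, mul_inv]
    rw [heq]
    have hgcast : g (r+1) = Real.log (Real.log ((r:ℝ)+1)) := by
      simp only [hg, Nat.cast_add, Nat.cast_one]
    rw [hgcast]
    refine mul_le_mul (aux_loglog_step hr3) (one_div_le_one_div_of_le hL0 hLL)
      (by positivity) ?_
    have := aux_loglog_step hr3
    have hpos : (0:ℝ) < 1/(((r:ℝ)+1) * Real.log ((r:ℝ)+1)) := by positivity
    exact le_trans hpos.le this
  have hnum : g n - g (s n) ≤ C := by
    have hm1 : (1:ℝ) ≤ (s n : ℝ) := by linarith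
    have hlogs : 1 < Real.log (s n : ℝ) := aux_log_gt_one hm3
    have hlogn : 1 < Real.log (n : ℝ) := aux_log_gt_one hn3'
    have h1 : (n:ℝ) ≤ (1+K) * (s n : ℝ)^q := by
      have h2 : (s n : ℝ) ≤ (s n : ℝ)^q := by
        calc (s n : ℝ) = (s n : ℝ)^(1:ℝ) := (Real.rpow_one _).symm
          _ ≤ (s n : ℝ)^q := Real.rpow_le_rpow_of_exponent_le hm1 hq
      have := hKs n
      nlinarith [this, h2]
    have h2 : Real.log (n:ℝ) ≤ Real.log (1+K) + q * Real.log (s n : ℝ) := by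
      calc Real.log (n:ℝ) ≤ Real.log ((1+K) * (s n : ℝ)^q) :=
            Real.log_le_log (by linarith) h1
        _ = Real.log (1+K) + Real.log ((s n : ℝ)^q) :=
            Real.log_mul (by linarith) (by positivity)
        _ = Real.log (1+K) + q * Real.log (s n : ℝ) := by
            rw [Real.log_rpow (by linarith)]
    have h4 : Real.log (n:ℝ) ≤ (q + Real.log (1+K)) * Real.log (s n : ℝ) := by
      nlinarith
    have h5 : g n ≤ Real.log ((q + Real.log (1+K)) * Real.log (s n : ℝ)) :=
      Real.log_le_log (by linarith) h4
    have h6 : Real.log ((q + Real.log (1+K)) * Real.log (s n : ℝ))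
        = C + g (s n) := by
      rw [Real.log_mul (by linarith) (by linarith)]
    linarith [h5.trans_eq h6]
  calc ∑ r ∈ Finset.Ico (s n) n, α (r+1)
      ≤ ∑ r ∈ Finset.Ico (s n) n, (g (r+1) - g r) * (1/L) :=
        Finset.sum_le_sum hterm
    _ = (∑ r ∈ Finset.Ico (s n) n, (g (r+1) - g r)) * (1/L) := by
        rw [Finset.sum_mul]
    _ = (g n - g (s n)) * (1/L) := by
        rw [Finset.sum_Ico_eq_sub _ (hs n), Finset.sum_range_sub, Finset.sum_range_sub]
        ring_nf
    _ ≤ C * (1/L) := mul_le_mul_of_nonneg_right hnum (by positivity)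

end AuxLemmas

/-- **Lemma (vanishing drift of DAGD).** The drift `bₙ = ∇f(x_{s(n)}) − ∇f(xₙ)`
satisfies `‖bₙ‖ ≤ C₃ V_max ∑_{r=s(n)}^{n−1} α_{r+1}`, where `C₃` is the Lipschitz
constant of `∇f` and `V_max = sup_{x∈𝒳} ‖∇f(x)‖`; consequently `‖bₙ‖ → 0`. -/
theorem dagd_drift_vanishes
    {d : ℕ} (Xset : Set (EuclideanSpace ℝ (Fin d)))
    (hXc : IsCompact Xset) (hXconv : Convex ℝ Xset) (hXne : Xset.Nonempty)
    (proj : EuclideanSpace ℝ (Fin d) → EuclideanSpace ℝ (Fin d))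
    (hprojmem : ∀ y, proj y ∈ Xset)
    (hprojmin : ∀ y, ∀ x ∈ Xset, ‖y - proj y‖ ≤ ‖y - x‖)
    (f : EuclideanSpace ℝ (Fin d) → ℝ)
    (gradf : EuclideanSpace ℝ (Fin d) → EuclideanSpace ℝ (Fin d))
    (hgrad : ∀ x, HasGradientAt f (gradf x) x)
    (C₃ : NNReal) (hLip : LipschitzWith C₃ gradf)
    (Vmax : ℝ) (hV : Vmax = ⨆ z : Xset, ‖gradf (z : EuclideanSpace ℝ (Fin d))‖)
    (α : ℕ → ℝ) (hα : ∀ n, 0 < α n)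
    (s : ℕ → ℕ) (hs : ∀ n, s n ≤ n)
    (hdelay : DelayStep s α)
    (x y : ℕ → EuclideanSpace ℝ (Fin d))
    (hxy : ∀ n, x n = proj (y n))
    (hrec : ∀ n, y (n + 1) = y n - α (n + 1) • gradf (x (s n))) :
    (∀ n, ‖gradf (x (s n)) - gradf (x n)‖ ≤
      (C₃ : ℝ) * Vmax * ∑ r ∈ Finset.Ico (s n) n, α (r + 1)) ∧
    Filter.Tendsto (fun n => ‖gradf (x (s n)) - gradf (x n)‖) Filter.atTop (nhds 0) := by
  haveI : Nonempty Xset := hXne.to_subtype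
  have hxmem : ∀ n, x n ∈ Xset := fun n => (hxy n) ▸ hprojmem (y n)
  obtain ⟨C0, hC0⟩ := hXc.exists_bound_of_continuousOn hLip.continuous.continuousOn
  have hbdd : BddAbove (Set.range fun z : Xset => ‖gradf (z : EuclideanSpace ℝ (Fin d))‖) := by
    refine ⟨C0, ?_⟩; rintro w ⟨z, rfl⟩; exact hC0 z z.2
  have hVle : ∀ z ∈ Xset, ‖gradf z‖ ≤ Vmax := fun z hz => by
    rw [hV]; exact le_ciSup hbdd ⟨z, hz⟩
  have hplip := aux_proj_nonexp Xset hXconv proj hprojmem hprojmin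
  have hyn : ∀ n, y n = y 0 - ∑ r ∈ Finset.range n, α (r+1) • gradf (x (s r)) := by
    intro n
    induction n with
    | zero => simp
    | succ n ih => rw [hrec n, ih, Finset.sum_range_succ]; abel
  have hdiff : ∀ n, y (s n) - y n = ∑ r ∈ Finset.Ico (s n) n, α (r+1) • gradf (x (s r)) := by
    intro n
    rw [hyn n, hyn (s n), Finset.sum_Ico_eq_sub _ (hs n)]
    abel
  have part1 : ∀ n, ‖gradf (x (s n)) - gradf (x n)‖ ≤
      (C₃ : ℝ) * Vmax * ∑ r ∈ Finset.Ico (s n) n, α (r + 1) := by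
    intro n
    calc ‖gradf (x (s n)) - gradf (x n)‖ ≤ (C₃:ℝ) * ‖x (s n) - x n‖ := by
          have := hLip.dist_le_mul (x (s n)) (x n)
          rwa [dist_eq_norm, dist_eq_norm] at this
      _ ≤ (C₃:ℝ) * ‖y (s n) - y n‖ := by
          refine mul_le_mul_of_nonneg_left ?_ C₃.2
          rw [hxy (s n), hxy n]; exact hplip _ _
      _ = (C₃:ℝ) * ‖∑ r ∈ Finset.Ico (s n) n, α (r+1) • gradf (x (s r))‖ := by rw [hdiff]
      _ ≤ (C₃:ℝ) * ∑ r ∈ Finset.Ico (s n) n, (α (r+1) * Vmax) := by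
          refine mul_le_mul_of_nonneg_left ?_ C₃.2
          refine (norm_sum_le _ _).trans (Finset.sum_le_sum fun r _ => ?_)
          rw [norm_smul, Real.norm_eq_abs, abs_of_pos (hα _)]
          exact mul_le_mul_of_nonneg_left (hVle _ (hxmem _)) (hα _).le
      _ = (C₃:ℝ) * Vmax * ∑ r ∈ Finset.Ico (s n) n, α (r + 1) := by
          rw [← Finset.sum_mul, mul_comm (∑ r ∈ Finset.Ico (s n) n, α (r+1)) Vmax, mul_assoc]
  have hS : Tendsto (fun n => ∑ r ∈ Finset.Ico (s n) n, α (r+1)) atTop (nhds 0) := by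
    rcases hdelay with ⟨D, hD, hsq, -⟩ | ⟨K, hK, p, hp0, hp1, hKs, hαf⟩ |
      ⟨K, hK, hKs, hαf⟩ | ⟨K, hK, q, hq, hKs, hαf⟩
    · exact aux_window α (fun n => (hα n).le) (aux_case1 α hα hsq) s D hD
    · exact aux_case2 α hα s hs K hK p hp0 hp1 hKs hαf
    · exact aux_case3 α hα s hs K hK hKs hαf
    · exact aux_case4 α hα s hs K hK q hq hKs hαf
  refine ⟨part1, ?_⟩
  have hbt := hS.const_mul ((C₃:ℝ)*Vmax)
  rw [mul_zero] at hbt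
  exact squeeze_zero (fun n => norm_nonneg _) part1 hbt

end
end

section
/- Let α_n = 1/n for n ≥ 1, and let s : ℕ → ℕ satisfy 1 ≤ s(n) ≤ n and n ≤ s(n) + K·s(n)^p for all n, for some constants K > 0 and 0 < p < 1 (sublinearly growing delays). Then the doubly weighted delay sum is finite: ∑_{n=1}^∞ α_{n+1} · (∑_{r=s(n)}^{n−1} α_{r+1}) < ∞. -/
noncomputable section

/-- **Lemma (sublinearly growing delays).** If `α n = 1/n` (for `n ≥ 1`) and
`1 ≤ s(n) ≤ n` with `n ≤ s(n) + K s(n)^p` for some `K > 0` and `0 < p < 1`, then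
`∑ₙ α_{n+1} (∑_{r=s(n)}^{n−1} α_{r+1}) < ∞`. -/
theorem sublinear_delay_weighted_sum_finite
    (α : ℕ → ℝ) (hα : ∀ n : ℕ, 1 ≤ n → α n = 1 / n)
    (K p : ℝ) (hK : 0 < K) (hp0 : 0 < p) (hp1 : p < 1)
    (s : ℕ → ℕ)
    (hs : ∀ n : ℕ, 1 ≤ n →
      1 ≤ s n ∧ s n ≤ n ∧ (n : ℝ) ≤ (s n : ℝ) + K * (s n : ℝ) ^ p) :
    Summable (fun n => α (n + 1) * ∑ r ∈ Finset.Ico (s n) n, α (r + 1)) := by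
  set C := K * (1 + K) ^ (1 - p) with hC
  have h1K : (0:ℝ) < 1 + K := by linarith
  have hCpos : 0 < C := mul_pos hK (Real.rpow_pos_of_pos h1K _)
  have hsum : Summable (fun n : ℕ => C * (n : ℝ) ^ (p - 2)) :=
    (Real.summable_nat_rpow.mpr (by linarith)).mul_left C
  refine Summable.of_nonneg_of_le (fun n => ?_) (fun n => ?_) hsum
  · apply mul_nonneg
    · rw [hα (n + 1) (by omega)]; positivity
    · apply Finset.sum_nonneg
      intro r _
      rw [hα (r + 1) (by omega)]; positivity
  · rcases Nat.eq_zero_or_pos n with hn | hn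
    · subst hn
      rw [show Finset.Ico (s 0) 0 = ∅ from Finset.Ico_eq_empty (by omega)]
      simp [Real.zero_rpow (by linarith : p - 2 ≠ 0)]
    · obtain ⟨h1, h2, h3⟩ := hs n hn
      have hN : (0:ℝ) < n := by exact_mod_cast hn
      have hS : (0:ℝ) < (s n : ℝ) := by exact_mod_cast h1
      have hS1 : (1:ℝ) ≤ (s n : ℝ) := by exact_mod_cast h1
      have hSp : ((s n : ℝ)) ^ p ≤ (s n : ℝ) := by
        calc ((s n : ℝ)) ^ p ≤ ((s n : ℝ)) ^ (1:ℝ) :=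
              Real.rpow_le_rpow_of_exponent_le hS1 (le_of_lt hp1)
          _ = (s n : ℝ) := Real.rpow_one _
      have hnle : (n : ℝ) ≤ (1 + K) * (s n : ℝ) := by nlinarith
      -- inner sum bound
      have hinner : ∑ r ∈ Finset.Ico (s n) n, α (r + 1) ≤ K * (s n : ℝ) ^ (p - 1) := by
        have hb : ∀ r ∈ Finset.Ico (s n) n, α (r + 1) ≤ 1 / (s n : ℝ) := by
          intro r hr
          rw [Finset.mem_Ico] at hr
          rw [hα (r + 1) (by omega)]
          apply one_div_le_one_div_of_le hS
          have : s n ≤ r + 1 := by omega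
          exact_mod_cast this
        calc ∑ r ∈ Finset.Ico (s n) n, α (r + 1)
            ≤ (Finset.Ico (s n) n).card • (1 / (s n : ℝ)) :=
              Finset.sum_le_card_nsmul _ _ _ hb
          _ = ((n - s n : ℕ) : ℝ) * (1 / (s n : ℝ)) := by
              rw [Nat.card_Ico, nsmul_eq_mul]
          _ = ((n : ℝ) - (s n : ℝ)) * (1 / (s n : ℝ)) := by
              rw [Nat.cast_sub h2]
          _ ≤ (K * (s n : ℝ) ^ p) * (1 / (s n : ℝ)) := by
              apply mul_le_mul_of_nonneg_right (by linarith) (by positivity)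
          _ = K * (s n : ℝ) ^ (p - 1) := by
              rw [Real.rpow_sub hS, Real.rpow_one]; ring
      have hmono : ((s n : ℝ)) ^ (p - 1) ≤ ((n : ℝ) / (1 + K)) ^ (p - 1) := by
        apply Real.rpow_le_rpow_of_nonpos (by positivity) _ (by linarith)
        rw [div_le_iff₀ h1K]
        linarith
      have hdr : ((n : ℝ) / (1 + K)) ^ (p - 1)
          = (n : ℝ) ^ (p - 1) * (1 + K) ^ (1 - p) := by
        rw [Real.div_rpow (le_of_lt hN) (le_of_lt h1K),
          show (1 - p) = -(p - 1) by ring, Real.rpow_neg (le_of_lt h1K)]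
        ring
      have halpha : α (n + 1) ≤ 1 / (n : ℝ) := by
        rw [hα (n + 1) (by omega)]
        apply one_div_le_one_div_of_le hN
        push_cast; linarith
      have halpha0 : 0 ≤ α (n + 1) := by
        rw [hα (n + 1) (by omega)]; positivity
      have hinner0 : 0 ≤ K * (s n : ℝ) ^ (p - 1) := by positivity
      calc α (n + 1) * ∑ r ∈ Finset.Ico (s n) n, α (r + 1)
          ≤ (1 / (n : ℝ)) * (K * (s n : ℝ) ^ (p - 1)) := by
            exact mul_le_mul halpha hinner (Finset.sum_nonneg fun r _ => by
              rw [hα (r + 1) (by omega)]; positivity) (by positivity)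
        _ ≤ (1 / (n : ℝ)) * (K * ((n : ℝ) / (1 + K)) ^ (p - 1)) := by
            apply mul_le_mul_of_nonneg_left _ (by positivity)
            exact mul_le_mul_of_nonneg_left hmono (le_of_lt hK)
        _ = C * (n : ℝ) ^ (p - 2) := by
            rw [hdr, hC, show (p - 2 : ℝ) = (p - 1) + (-1) by ring,
              Real.rpow_add hN, Real.rpow_neg_one]
            ring
  done
end
end

section
/- Let α_n = 1/(n log n) for n ≥ 2, and let s : ℕ → ℕ satisfy 2 ≤ s(n) ≤ n and n ≤ (K+1)·s(n) for all n, for some constant K > 0 (linearly growing delays). Then the doubly weighted delay sum is finite: ∑_{n=2}^∞ α_{n+1} · (∑_{r=s(n)}^{n−1} α_{r+1}) < ∞. -/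
noncomputable section

open Real Filter

lemma aux_log_sq_summable : Summable (fun n : ℕ => 1 / ((n : ℝ) * (Real.log n)^2)) := by
  rw [← summable_nat_add_iff 2]
  set g : ℕ → ℝ := fun n => 1 / (((n : ℝ) + 2) * (Real.log ((n : ℝ) + 2))^2) with hg
  have hgeq : (fun n : ℕ => 1 / ((((n + 2 : ℕ)) : ℝ) * (Real.log ((n + 2 : ℕ) : ℝ))^2)) = g := by
    funext n
    simp only [hg]
    norm_num
  rw [hgeq]
  have h_nonneg : ∀ n, 0 ≤ g n := by
    intro n
    apply one_div_nonneg.mpr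
    positivity
  have h_mono : ∀ ⦃m n : ℕ⦄, 0 < m → m ≤ n → g n ≤ g m := by
    intro m n hm hmn
    apply one_div_le_one_div_of_le
    · have h2 : (2:ℝ) ≤ (m:ℝ) + 2 := by
        have := Nat.cast_nonneg (α := ℝ) m; linarith
      have hlog : 0 < Real.log ((m:ℝ) + 2) := Real.log_pos (by linarith)
      positivity
    · have hc : (m:ℝ) + 2 ≤ (n:ℝ) + 2 := by
        have : (m:ℝ) ≤ n := by exact_mod_cast hmn
        linarith
      have hlm : 0 < Real.log ((m:ℝ) + 2) := Real.log_pos (by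
        have : (0:ℝ) ≤ m := Nat.cast_nonneg m
        linarith)
      have hlog : Real.log ((m:ℝ) + 2) ≤ Real.log ((n:ℝ) + 2) :=
        Real.log_le_log (by positivity) hc
      have := sq_nonneg (Real.log ((m:ℝ) + 2))
      apply mul_le_mul hc ?_ (by positivity) (by positivity)
      exact pow_le_pow_left₀ hlm.le hlog 2
  rw [← summable_condensed_iff_of_nonneg h_nonneg h_mono]
  apply summable_of_isBigO_nat (Real.summable_one_div_nat_pow.mpr one_lt_two)
  rw [Asymptotics.isBigO_iff]
  refine ⟨(1 / Real.log 2)^2, ?_⟩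
  filter_upwards [eventually_ge_atTop 1] with k hk
  have hx : (0:ℝ) < (2:ℝ)^k := by positivity
  have hcast : (((2:ℕ)^k : ℕ) : ℝ) = (2:ℝ)^k := by push_cast; ring
  have hlogpos : 0 < Real.log ((2:ℝ)^k + 2) := Real.log_pos (by linarith)
  have hval : (2:ℝ)^k * g (2^k) = (2:ℝ)^k / (((2:ℝ)^k + 2) * (Real.log ((2:ℝ)^k + 2))^2) := by
    simp [hg, hcast, div_eq_mul_inv, one_div]
  have hnn : 0 ≤ (2:ℝ)^k * g (2^k) := mul_nonneg hx.le (h_nonneg _)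
  rw [Real.norm_of_nonneg hnn, hval]
  have hklog : (k : ℝ) * Real.log 2 ≤ Real.log ((2:ℝ)^k + 2) := by
    calc (k : ℝ) * Real.log 2 = Real.log ((2:ℝ)^k) := by rw [Real.log_pow]
    _ ≤ Real.log ((2:ℝ)^k + 2) := Real.log_le_log hx (by linarith)
  have hklogpos : 0 < (k:ℝ) * Real.log 2 := by
    have : (1:ℝ) ≤ k := by exact_mod_cast hk
    have := Real.log_pos (by norm_num : (1:ℝ) < 2)
    positivity
  have hsq : ((k:ℝ) * Real.log 2)^2 ≤ (Real.log ((2:ℝ)^k + 2))^2 :=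
    pow_le_pow_left₀ hklogpos.le hklog 2
  have hkpos : (0:ℝ) < (k:ℝ) := by
    have : (1:ℝ) ≤ k := by exact_mod_cast hk
    linarith
  have hnorm : ‖1 / (k:ℝ)^2‖ = 1/(k:ℝ)^2 := Real.norm_of_nonneg (by positivity)
  rw [hnorm]
  have hden : ((k:ℝ) * Real.log 2)^2 ≤ ((2:ℝ)^k + 2) * (Real.log ((2:ℝ)^k + 2))^2 := by
    calc ((k:ℝ) * Real.log 2)^2 ≤ 1 * (Real.log ((2:ℝ)^k + 2))^2 := by rw [one_mul]; exact hsq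
    _ ≤ ((2:ℝ)^k + 2) * (Real.log ((2:ℝ)^k + 2))^2 := by
        apply mul_le_mul_of_nonneg_right (by linarith) (by positivity)
  have hD : (2:ℝ)^k * ((k:ℝ) * Real.log 2)^2 ≤ ((2:ℝ)^k + 2) * (Real.log ((2:ℝ)^k + 2))^2 := by
    apply mul_le_mul (by linarith) hsq (by positivity) (by positivity)
  rw [div_le_iff₀ (by positivity)]
  have hlog2 : (0:ℝ) < Real.log 2 := Real.log_pos (by norm_num)
  have key : (1 / Real.log 2)^2 * (1/(k:ℝ)^2) * ((2:ℝ)^k * ((k:ℝ) * Real.log 2)^2) = (2:ℝ)^k := by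
    field_simp
  calc (2:ℝ)^k = (1 / Real.log 2)^2 * (1/(k:ℝ)^2) * ((2:ℝ)^k * ((k:ℝ) * Real.log 2)^2) := key.symm
    _ ≤ (1 / Real.log 2)^2 * (1/(k:ℝ)^2) * (((2:ℝ)^k + 2) * (Real.log ((2:ℝ)^k + 2))^2) := by
        apply mul_le_mul_of_nonneg_left hD (by positivity)

/-- **Lemma (linearly growing delays).** If `α n = 1/(n log n)` (for `n ≥ 2`) and
`2 ≤ s(n) ≤ n` with `n ≤ (K+1) s(n)` for some `K > 0`, then
`∑ₙ α_{n+1} (∑_{r=s(n)}^{n−1} α_{r+1}) < ∞`. -/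
theorem linear_delay_weighted_sum_finite
    (α : ℕ → ℝ) (hα : ∀ n : ℕ, 2 ≤ n → α n = 1 / (n * Real.log n))
    (K : ℝ) (hK : 0 < K)
    (s : ℕ → ℕ)
    (hs : ∀ n : ℕ, 2 ≤ n → 2 ≤ s n ∧ s n ≤ n ∧ (n : ℝ) ≤ (K + 1) * (s n : ℝ)) :
    Summable (fun n => α (n + 1) * ∑ r ∈ Finset.Ico (s n) n, α (r + 1)) := by
  apply summable_of_isBigO_nat aux_log_sq_summable
  rw [Asymptotics.isBigO_iff]
  refine ⟨2 * K, ?_⟩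
  have hN : ∀ᶠ n : ℕ in atTop, 3 ≤ n ∧ ((K+1)^2 : ℝ) ≤ n := by
    filter_upwards [eventually_ge_atTop (max 3 ⌈(K+1)^2⌉₊)] with n hn
    constructor
    · exact le_trans (le_max_left _ _) hn
    · have h1 : ⌈(K+1)^2⌉₊ ≤ n := le_trans (le_max_right _ _) hn
      calc ((K+1)^2 : ℝ) ≤ (⌈(K+1)^2⌉₊ : ℝ) := Nat.le_ceil _
        _ ≤ n := by exact_mod_cast h1
  filter_upwards [hN] with n ⟨hn3, hnK⟩
  obtain ⟨h1, h2, h3⟩ := hs n (by omega)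
  have hsn2 : (2:ℝ) ≤ (s n : ℝ) := by exact_mod_cast h1
  have hsn0 : (0:ℝ) < (s n : ℝ) := by linarith
  have hlogs : 0 < Real.log (s n) := Real.log_pos (by linarith)
  have hn3R : (3:ℝ) ≤ (n:ℝ) := by exact_mod_cast hn3
  have hlogn : 0 < Real.log n := Real.log_pos (by linarith)
  have hK1 : (1:ℝ) < K + 1 := by linarith
  -- inner sum termwise bound
  have hterm : ∀ r ∈ Finset.Ico (s n) n, α (r + 1) ≤ 1 / ((s n : ℝ) * Real.log (s n)) := by
    intro r hr
    rw [Finset.mem_Ico] at hr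
    have hr2 : 2 ≤ r + 1 := by omega
    rw [hα (r+1) hr2]
    have hsr : (s n : ℝ) ≤ ((r:ℝ) + 1) := by
      have : (s n : ℝ) ≤ (r : ℝ) := by exact_mod_cast hr.1
      linarith
    have hlogr : Real.log (s n) ≤ Real.log ((r:ℝ)+1) := Real.log_le_log hsn0 hsr
    have : ((r+1 : ℕ) : ℝ) = (r:ℝ) + 1 := by push_cast; ring
    rw [this]
    apply one_div_le_one_div_of_le (by positivity)
    exact mul_le_mul hsr hlogr hlogs.le (by linarith)
  have hSnn : 0 ≤ ∑ r ∈ Finset.Ico (s n) n, α (r + 1) := by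
    apply Finset.sum_nonneg
    intro r hr
    rw [Finset.mem_Ico] at hr
    rw [hα (r+1) (by omega)]
    apply one_div_nonneg.mpr
    have hr1 : (1:ℝ) ≤ ((r+1:ℕ):ℝ) := by exact_mod_cast Nat.le_add_left 1 r
    have := Real.log_nonneg hr1
    positivity
  have hcard : ((Finset.Ico (s n) n).card : ℝ) = (n : ℝ) - (s n : ℝ) := by
    rw [Nat.card_Ico]
    exact Nat.cast_sub h2
  have hS : (∑ r ∈ Finset.Ico (s n) n, α (r + 1))
      ≤ ((n:ℝ) - (s n : ℝ)) * (1 / ((s n : ℝ) * Real.log (s n))) := by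
    have := Finset.sum_le_card_nsmul (Finset.Ico (s n) n) (fun r => α (r+1))
      (1 / ((s n : ℝ) * Real.log (s n))) hterm
    rwa [nsmul_eq_mul, hcard] at this
  have hS2 : (∑ r ∈ Finset.Ico (s n) n, α (r + 1)) ≤ K / Real.log (s n) := by
    refine hS.trans ?_
    have h4 : (n:ℝ) - (s n : ℝ) ≤ K * (s n : ℝ) := by nlinarith
    have : ((n:ℝ) - (s n : ℝ)) * (1 / ((s n : ℝ) * Real.log (s n)))
        ≤ (K * (s n : ℝ)) * (1 / ((s n : ℝ) * Real.log (s n))) := by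
      apply mul_le_mul_of_nonneg_right h4 (by positivity)
    refine this.trans (le_of_eq ?_)
    rw [one_div, mul_inv, div_eq_mul_inv]
    field_simp
  -- log (s n) ≥ (1/2) log n
  have hlogKn : 2 * Real.log (K + 1) ≤ Real.log n := by
    calc 2 * Real.log (K + 1) = Real.log ((K+1)^2) := by
          rw [Real.log_pow]; push_cast; ring
      _ ≤ Real.log n := Real.log_le_log (by positivity) hnK
  have hlogsn : Real.log n - Real.log (K+1) ≤ Real.log (s n) := by
    have hdiv : (n:ℝ) / (K+1) ≤ (s n : ℝ) := by
      rw [div_le_iff₀ (by linarith)]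
      linarith [h3]
    calc Real.log n - Real.log (K+1) = Real.log ((n:ℝ)/(K+1)) := by
          rw [Real.log_div (by linarith) (by linarith)]
      _ ≤ Real.log (s n) := Real.log_le_log (by positivity) hdiv
  have hhalf : Real.log n / 2 ≤ Real.log (s n) := by linarith
  have hS3 : (∑ r ∈ Finset.Ico (s n) n, α (r + 1)) ≤ 2 * K / Real.log n := by
    refine hS2.trans ?_
    rw [div_le_div_iff₀ hlogs (by linarith)]
    nlinarith
  -- α (n+1) bound
  have hα1 : α (n + 1) ≤ 1 / ((n:ℝ) * Real.log n) := by
    rw [hα (n+1) (by omega)]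
    have hc : ((n+1:ℕ):ℝ) = (n:ℝ) + 1 := by push_cast; ring
    rw [hc]
    apply one_div_le_one_div_of_le (by positivity)
    have hlog : Real.log n ≤ Real.log ((n:ℝ)+1) := Real.log_le_log (by linarith) (by linarith)
    apply mul_le_mul (by linarith) hlog hlogn.le (by linarith)
  have hα0 : 0 ≤ α (n + 1) := by
    rw [hα (n+1) (by omega)]
    have hc : ((n+1:ℕ):ℝ) = (n:ℝ) + 1 := by push_cast; ring
    rw [hc]
    have := Real.log_nonneg (by linarith : (1:ℝ) ≤ (n:ℝ)+1)
    positivity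
  -- combine
  have hfinal : α (n + 1) * ∑ r ∈ Finset.Ico (s n) n, α (r + 1)
      ≤ 2 * K * (1 / ((n:ℝ) * (Real.log n)^2)) := by
    calc α (n + 1) * ∑ r ∈ Finset.Ico (s n) n, α (r + 1)
        ≤ (1 / ((n:ℝ) * Real.log n)) * (2 * K / Real.log n) := by
          apply mul_le_mul hα1 hS3 hSnn (by positivity)
      _ = 2 * K * (1 / ((n:ℝ) * (Real.log n)^2)) := by
          field_simp
  have hnnL : 0 ≤ α (n + 1) * ∑ r ∈ Finset.Ico (s n) n, α (r + 1) := mul_nonneg hα0 hSnn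
  rw [Real.norm_of_nonneg hnnL, Real.norm_of_nonneg (by positivity : (0:ℝ) ≤ 1 / ((n:ℝ) * (Real.log n)^2))]
  exact hfinal

end
end

section
/- Let α_n = 1/(n · log n · log log n) for n ≥ 3, and let s : ℕ → ℕ satisfy 3 ≤ s(n) ≤ n and n ≤ s(n) + K·s(n)^q for all n, for some constants K > 0 and q ≥ 1 (polynomially growing delays). Then s(n) = Ω(n^{1/(2q)}) and the doubly weighted delay sum is finite: ∑_{n=3}^∞ α_{n+1} · (∑_{r=s(n)}^{n−1} α_{r+1}) < ∞. -/
noncomputable section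
set_option maxHeartbeats 1000000

open Real Filter Finset

private lemma one_lt_log_aux {x : ℝ} (hx : 3 ≤ x) : 1 < Real.log x := by
  rw [Real.lt_log_iff_exp_lt (by linarith)]
  have h := Real.exp_one_lt_d9
  linarith

/-- Key per-term inequality: `1/((x+1) log(x+1)) ≤ log log (x+1) - log log x` for `x ≥ 3`. -/
private lemma key_ineq {x : ℝ} (hx : 3 ≤ x) :
    1 / ((x + 1) * Real.log (x + 1)) ≤
      Real.log (Real.log (x + 1)) - Real.log (Real.log x) := by
  have hx0 : (0:ℝ) < x := by linarith
  have hx1 : (3:ℝ) ≤ x + 1 := by linarith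
  have ha : 1 < Real.log x := one_lt_log_aux hx
  have hb : 1 < Real.log (x + 1) := one_lt_log_aux hx1
  have hab : Real.log x ≤ Real.log (x + 1) := Real.log_le_log hx0 (by linarith)
  -- step 1 : 1/(x+1) ≤ log (x+1) - log x
  have h1 : 1 / (x + 1) ≤ Real.log (x + 1) - Real.log x := by
    have h := Real.log_le_sub_one_of_pos (show (0:ℝ) < x / (x + 1) by positivity)
    rw [Real.log_div (ne_of_gt hx0) (by linarith)] at h
    have heq : x / (x + 1) - 1 = -(1 / (x + 1)) := by field_simp; ring
    linarith [heq ▸ h]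
  -- step 2 : (log(x+1) - log x)/log(x+1) ≤ log log (x+1) - log log x
  have h2 : (Real.log (x + 1) - Real.log x) / Real.log (x + 1) ≤
      Real.log (Real.log (x + 1)) - Real.log (Real.log x) := by
    have h := Real.log_le_sub_one_of_pos
      (show (0:ℝ) < Real.log x / Real.log (x + 1) by positivity)
    rw [Real.log_div (by linarith) (by linarith)] at h
    have heq : Real.log x / Real.log (x + 1) - 1
        = -((Real.log (x + 1) - Real.log x) / Real.log (x + 1)) := by
      field_simp
      ring
    rw [heq] at h
    linarith
  calc 1 / ((x + 1) * Real.log (x + 1)) = (1 / (x + 1)) / Real.log (x + 1) := by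
        rw [div_div]
    _ ≤ (Real.log (x + 1) - Real.log x) / Real.log (x + 1) := by
        gcongr
    _ ≤ _ := h2

private lemma key_ineq_nat {k : ℕ} (hk : 3 ≤ k) :
    1 / (((k : ℝ) + 1) * Real.log ((k : ℝ) + 1)) ≤
      Real.log (Real.log ((k + 1 : ℕ) : ℝ)) - Real.log (Real.log (k : ℝ)) := by
  have : (3:ℝ) ≤ (k : ℝ) := by exact_mod_cast hk
  have h := key_ineq this
  push_cast
  convert h using 3

/-- Telescoping bound : `∑_{r ∈ [m, n)} 1/((r+1) log(r+1)) ≤ log log n - log log m`. -/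
private lemma telescope_bound {m n : ℕ} (hm : 3 ≤ m) (hmn : m ≤ n) :
    ∑ r ∈ Finset.Ico m n, 1 / (((r : ℝ) + 1) * Real.log ((r : ℝ) + 1)) ≤
      Real.log (Real.log (n : ℝ)) - Real.log (Real.log (m : ℝ)) := by
  set g : ℕ → ℝ := fun r => Real.log (Real.log (r : ℝ)) with hg
  calc ∑ r ∈ Finset.Ico m n, 1 / (((r : ℝ) + 1) * Real.log ((r : ℝ) + 1))
      ≤ ∑ r ∈ Finset.Ico m n, (g (r + 1) - g r) := by
        apply Finset.sum_le_sum
        intro r hr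
        have hr3 : 3 ≤ r := hm.trans (Finset.mem_Ico.mp hr).1
        exact key_ineq_nat hr3
    _ = g n - g m := by
        rw [Finset.sum_Ico_eq_sub _ hmn, Finset.sum_range_sub g, Finset.sum_range_sub g]
        ring

/-- Per-term inequality for the comparison series. -/
private lemma key_ineq2 {k : ℕ} (hk : 3 ≤ k) :
    1 / (((k : ℝ) + 1) * Real.log ((k : ℝ) + 1) * (Real.log (Real.log ((k + 1 : ℕ) : ℝ)))^2) ≤
      1 / Real.log (Real.log (k : ℝ)) - 1 / Real.log (Real.log ((k + 1 : ℕ) : ℝ)) := by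
  have hk3 : (3:ℝ) ≤ (k : ℝ) := by exact_mod_cast hk
  have hk13 : (3:ℝ) ≤ ((k + 1 : ℕ) : ℝ) := by push_cast; linarith
  have ha1 : 1 < Real.log (k : ℝ) := one_lt_log_aux hk3
  have hb1 : 1 < Real.log ((k + 1 : ℕ) : ℝ) := one_lt_log_aux hk13
  have ha : 0 < Real.log (Real.log (k : ℝ)) := Real.log_pos ha1
  have hb : 0 < Real.log (Real.log ((k + 1 : ℕ) : ℝ)) := Real.log_pos hb1
  have hab : Real.log (Real.log (k : ℝ)) ≤ Real.log (Real.log ((k + 1 : ℕ) : ℝ)) := by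
    apply Real.log_le_log (by linarith)
    apply Real.log_le_log (by linarith)
    push_cast; linarith
  set a := Real.log (Real.log (k : ℝ))
  set b := Real.log (Real.log ((k + 1 : ℕ) : ℝ))
  have hkey := key_ineq_nat hk
  have heq : 1 / a - 1 / b = (b - a) / (a * b) := by field_simp
  rw [heq]
  have hX : (0:ℝ) < ((k : ℝ) + 1) * Real.log ((k : ℝ) + 1) := by
    have : (0:ℝ) < Real.log ((k:ℝ) + 1) := by
      have := one_lt_log_aux (show (3:ℝ) ≤ (k:ℝ)+1 by linarith); linarith
    positivity
  rw [div_le_div_iff₀ (by positivity) (by positivity)]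
  have h1X : 1 ≤ (b - a) * (((k : ℝ) + 1) * Real.log ((k : ℝ) + 1)) := by
    rw [div_le_iff₀ hX] at hkey
    linarith
  have hb2 : b ^ 2 ≤ (b - a) * (((k : ℝ) + 1) * Real.log ((k : ℝ) + 1)) * b ^ 2 := by
    nlinarith [sq_nonneg b, h1X]
  have hab2 : a * b ≤ b ^ 2 := by nlinarith
  nlinarith [hb2, hab2]

/-- The comparison series `∑ 1/(n log n (log log n)^2)` is summable. -/
private lemma summable_comparison :
    Summable (fun n : ℕ => 1 / ((n : ℝ) * Real.log n * (Real.log (Real.log n))^2)) := by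
  set g : ℕ → ℝ := fun n => 1 / ((n : ℝ) * Real.log n * (Real.log (Real.log n))^2) with hgdef
  have hg_nonneg : ∀ n, 0 ≤ g n := by
    intro n
    apply one_div_nonneg.mpr
    have h1 : (0:ℝ) ≤ (n : ℝ) := Nat.cast_nonneg n
    have h2 : (0:ℝ) ≤ Real.log (n : ℝ) := Real.log_natCast_nonneg n
    positivity
  rw [← _root_.summable_nat_add_iff 4]
  apply summable_of_sum_range_le (c := 1 / Real.log (Real.log (3 : ℝ)))
    (fun n => hg_nonneg _)
  intro n
  calc ∑ i ∈ Finset.range n, g (i + 4)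
      ≤ ∑ i ∈ Finset.range n, ((fun j : ℕ => 1 / Real.log (Real.log ((j + 3 : ℕ) : ℝ))) i
          - (fun j : ℕ => 1 / Real.log (Real.log ((j + 3 : ℕ) : ℝ))) (i + 1)) := by
        apply Finset.sum_le_sum
        intro i _
        show g (i + 4) ≤ 1 / Real.log (Real.log ((i + 3 : ℕ) : ℝ))
          - 1 / Real.log (Real.log ((i + 1 + 3 : ℕ) : ℝ))
        rw [show i + 1 + 3 = i + 4 from rfl]
        have h := key_ineq2 (k := i + 3) (by omega)
        rw [show (i + 3) + 1 = i + 4 from rfl] at h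
        have hc2 : ((i + 3 : ℕ) : ℝ) + 1 = ((i + 4 : ℕ) : ℝ) := by push_cast; ring
        rw [hc2] at h
        exact h
    _ = (fun j : ℕ => 1 / Real.log (Real.log ((j + 3 : ℕ) : ℝ))) 0
          - (fun j : ℕ => 1 / Real.log (Real.log ((j + 3 : ℕ) : ℝ))) n :=
        Finset.sum_range_sub' _ n
    _ ≤ 1 / Real.log (Real.log (3 : ℝ)) := by
        show 1 / Real.log (Real.log ((0 + 3 : ℕ) : ℝ)) -
            1 / Real.log (Real.log ((n + 3 : ℕ) : ℝ)) ≤ _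
        have h3 : (3:ℝ) ≤ ((n + 3 : ℕ) : ℝ) := by push_cast; linarith
        have h4 := Real.log_pos (one_lt_log_aux h3)
        have h5 : 0 ≤ 1 / Real.log (Real.log ((n + 3 : ℕ) : ℝ)) := by positivity
        have h6 : ((0 + 3 : ℕ) : ℝ) = (3:ℝ) := by norm_num
        rw [h6]
        linarith

/-- **Lemma (polynomially growing delays).** If `α n = 1/(n log n · log log n)`
(for `n ≥ 3`) and `3 ≤ s(n) ≤ n` with `n ≤ s(n) + K s(n)^q` for some `K > 0` and
`q ≥ 1`, then `s(n) = Ω(n^{1/(2q)})` and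
`∑ₙ α_{n+1} (∑_{r=s(n)}^{n−1} α_{r+1}) < ∞`. -/
theorem polynomial_delay_weighted_sum_finite
    (α : ℕ → ℝ)
    (hα : ∀ n : ℕ, 3 ≤ n → α n = 1 / (n * Real.log n * Real.log (Real.log n)))
    (K q : ℝ) (hK : 0 < K) (hq : 1 ≤ q)
    (s : ℕ → ℕ)
    (hs : ∀ n : ℕ, 3 ≤ n →
      3 ≤ s n ∧ s n ≤ n ∧ (n : ℝ) ≤ (s n : ℝ) + K * (s n : ℝ) ^ q) :
    (∃ c : ℝ, 0 < c ∧ ∃ N : ℕ, ∀ n : ℕ, N ≤ n →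
      c * (n : ℝ) ^ (1 / (2 * q)) ≤ (s n : ℝ)) ∧
    Summable (fun n => α (n + 1) * ∑ r ∈ Finset.Ico (s n) n, α (r + 1)) := by
  have hq0 : 0 < q := lt_of_lt_of_le one_pos hq
  set c : ℝ := ((1 + K) ^ (1 / q))⁻¹ with hc_def
  have hc_pos : 0 < c := by
    apply inv_pos.mpr
    exact Real.rpow_pos_of_pos (by linarith) _
  -- Part 1
  have part1 : ∀ n : ℕ, 3 ≤ n → c * (n : ℝ) ^ (1 / (2 * q)) ≤ (s n : ℝ) := by
    intro n hn
    obtain ⟨hs3, hsn, hpoly⟩ := hs n hn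
    have hn1 : (1:ℝ) ≤ (n : ℝ) := by exact_mod_cast le_trans (by norm_num) hn
    have hs1 : (1:ℝ) ≤ (s n : ℝ) := by exact_mod_cast le_trans (by norm_num) hs3
    have hs0 : (0:ℝ) ≤ (s n : ℝ) := by linarith
    have hsq : (s n : ℝ) ≤ (s n : ℝ) ^ q := by
      nth_rewrite 1 [← Real.rpow_one (s n : ℝ)]
      exact Real.rpow_le_rpow_of_exponent_le hs1 hq
    have hup : (n : ℝ) ≤ (1 + K) * (s n : ℝ) ^ q := by nlinarith
    have hdiv : (n : ℝ) / (1 + K) ≤ (s n : ℝ) ^ q := by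
      rw [div_le_iff₀ (by linarith)]; nlinarith
    have h2 : ((n : ℝ) / (1 + K)) ^ (1 / q) ≤ ((s n : ℝ) ^ q) ^ (1 / q) :=
      Real.rpow_le_rpow (by positivity) hdiv (by positivity)
    have h3 : ((s n : ℝ) ^ q) ^ (1 / q) = (s n : ℝ) := by
      rw [← Real.rpow_mul hs0, mul_one_div, div_self (ne_of_gt hq0), Real.rpow_one]
    have h4 : ((n : ℝ) / (1 + K)) ^ (1 / q) = (n : ℝ) ^ (1 / q) / (1 + K) ^ (1 / q) :=
      Real.div_rpow (by linarith) (by linarith) (1 / q)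
    have h5 : (n : ℝ) ^ (1 / (2 * q)) ≤ (n : ℝ) ^ (1 / q) := by
      apply Real.rpow_le_rpow_of_exponent_le hn1
      rw [div_le_div_iff₀ (by linarith) hq0]
      nlinarith
    calc c * (n : ℝ) ^ (1 / (2 * q)) ≤ c * (n : ℝ) ^ (1 / q) := by
          exact mul_le_mul_of_nonneg_left h5 (le_of_lt hc_pos)
      _ = (n : ℝ) ^ (1 / q) / (1 + K) ^ (1 / q) := by
          rw [hc_def]; rw [div_eq_mul_inv]; ring
      _ = ((n : ℝ) / (1 + K)) ^ (1 / q) := h4.symm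
      _ ≤ ((s n : ℝ) ^ q) ^ (1 / q) := h2
      _ = (s n : ℝ) := h3
  refine ⟨⟨c, hc_pos, 3, part1⟩, ?_⟩
  -- Part 2 : summability
  set g : ℕ → ℝ := fun n => 1 / ((n : ℝ) * Real.log n * (Real.log (Real.log n))^2) with hgdef
  apply summable_of_isBigO_nat summable_comparison
  rw [Asymptotics.isBigO_iff]
  refine ⟨2 * Real.log (4 * q), ?_⟩
  have htop : Tendsto (fun n : ℕ => Real.log n) atTop atTop :=
    Real.tendsto_log_atTop.comp tendsto_natCast_atTop_atTop
  have htop2 : Tendsto (fun n : ℕ => Real.log (Real.log n)) atTop atTop :=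
    Real.tendsto_log_atTop.comp htop
  have hev1 : ∀ᶠ n : ℕ in atTop, 4 * q * (-Real.log c) ≤ Real.log n :=
    htop.eventually_ge_atTop _
  have hev2 : ∀ᶠ n : ℕ in atTop, 2 * Real.log (4 * q) ≤ Real.log (Real.log n) :=
    htop2.eventually_ge_atTop _
  have hev3 : ∀ᶠ n : ℕ in atTop, 3 ≤ n := eventually_ge_atTop 3
  filter_upwards [hev1, hev2, hev3] with n h1 h2 h3
  -- notation
  obtain ⟨hs3, hsn, -⟩ := hs n h3
  have hn3 : (3:ℝ) ≤ (n : ℝ) := by exact_mod_cast h3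
  have hm3 : (3:ℝ) ≤ (s n : ℝ) := by exact_mod_cast hs3
  have hmn : (s n : ℝ) ≤ (n : ℝ) := by exact_mod_cast hsn
  have hlogn1 : 1 < Real.log (n : ℝ) := one_lt_log_aux hn3
  have hlogm1 : 1 < Real.log (s n : ℝ) := one_lt_log_aux hm3
  have hllogn : 0 < Real.log (Real.log (n : ℝ)) := Real.log_pos hlogn1
  have hllogm : 0 < Real.log (Real.log (s n : ℝ)) := Real.log_pos hlogm1
  have hlog4q : 0 < Real.log (4 * q) := Real.log_pos (by nlinarith)
  -- log s n ≥ (1/(4q)) log n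
  have hlogs_lb1 : Real.log c + (1 / (2 * q)) * Real.log (n : ℝ) ≤ Real.log (s n : ℝ) := by
    have h := Real.log_le_log (by positivity) (part1 n h3)
    rwa [Real.log_mul (ne_of_gt hc_pos) (by positivity),
      Real.log_rpow (by positivity : (0:ℝ) < (n:ℝ))] at h
  have hnegc : -Real.log c ≤ (1 / (4 * q)) * Real.log (n : ℝ) := by
    rw [one_div, inv_mul_eq_div, le_div_iff₀ (by positivity)]
    linarith [h1]
  have hlogs_lb : (1 / (4 * q)) * Real.log (n : ℝ) ≤ Real.log (s n : ℝ) := by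
    have heq : (1 / (2 * q)) * Real.log (n : ℝ)
        = (1 / (4 * q)) * Real.log (n : ℝ) + (1 / (4 * q)) * Real.log (n : ℝ) := by
      field_simp; ring
    linarith [hlogs_lb1, hnegc, heq ▸ hlogs_lb1]
  have htq : 0 < (1 / (4 * q)) * Real.log (n : ℝ) := by positivity
  -- log n ≤ 4q log s
  have hlogn_ub : Real.log (n : ℝ) ≤ 4 * q * Real.log (s n : ℝ) := by
    have := mul_le_mul_of_nonneg_left hlogs_lb (le_of_lt (by positivity : (0:ℝ) < 4 * q))
    calc Real.log (n : ℝ) = 4 * q * ((1 / (4 * q)) * Real.log (n : ℝ)) := by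
          field_simp
      _ ≤ 4 * q * Real.log (s n : ℝ) := this
  -- log log n - log log s ≤ log (4q)
  have hdiff : Real.log (Real.log (n : ℝ)) - Real.log (Real.log (s n : ℝ)) ≤
      Real.log (4 * q) := by
    rw [← Real.log_div (by linarith) (by linarith)]
    apply Real.log_le_log (by positivity)
    rw [div_le_iff₀ (by linarith)]
    linarith
  -- log log s ≥ (1/2) log log n
  have hllogm_lb : (1 / 2) * Real.log (Real.log (n : ℝ)) ≤ Real.log (Real.log (s n : ℝ)) := by
    have hstep : Real.log ((1 / (4 * q)) * Real.log (n : ℝ)) ≤ Real.log (Real.log (s n : ℝ)) :=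
      Real.log_le_log htq hlogs_lb
    rw [Real.log_mul (by positivity) (by linarith), one_div, Real.log_inv] at hstep
    linarith
  have hllogm_nlb : 0 < (1/2) * Real.log (Real.log (n : ℝ)) := by positivity
  -- bound on α (n+1)
  have hαn : α (n + 1) = 1 / (((n : ℝ) + 1) * Real.log ((n : ℝ) + 1) *
      Real.log (Real.log ((n : ℝ) + 1))) := by
    rw [hα (n + 1) (by omega)]; push_cast; ring_nf
  have hlogn1' : 1 < Real.log ((n : ℝ) + 1) := one_lt_log_aux (by linarith)
  have hllogn1' : 0 < Real.log (Real.log ((n : ℝ) + 1)) := Real.log_pos hlogn1'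
  have hα_le : α (n + 1) ≤ 1 / ((n : ℝ) * Real.log (n : ℝ) * Real.log (Real.log (n : ℝ))) := by
    rw [hαn]
    apply one_div_le_one_div_of_le (by positivity)
    have e1 : (n:ℝ) ≤ (n:ℝ) + 1 := by linarith
    have e2 : Real.log (n:ℝ) ≤ Real.log ((n:ℝ) + 1) := Real.log_le_log (by linarith) e1
    have e3 : Real.log (Real.log (n:ℝ)) ≤ Real.log (Real.log ((n:ℝ) + 1)) :=
      Real.log_le_log (by linarith) e2
    have p1 : (0:ℝ) ≤ (n:ℝ) := by linarith
    gcongr <;> linarith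
  have hα_pos : 0 < α (n + 1) := by
    rw [hαn]; positivity
  -- bound on inner sum
  have hinner_nonneg : 0 ≤ ∑ r ∈ Finset.Ico (s n) n, α (r + 1) := by
    apply Finset.sum_nonneg
    intro r hr
    obtain ⟨hr1, hr2⟩ := Finset.mem_Ico.mp hr
    have hr3 : 3 ≤ r := le_trans hs3 hr1
    have hr3' : (3:ℝ) ≤ (r : ℝ) := by exact_mod_cast hr3
    rw [hα (r + 1) (by omega)]
    push_cast
    have := one_lt_log_aux (show (3:ℝ) ≤ (r:ℝ)+1 by linarith)
    have := Real.log_pos this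
    positivity
  have hinner : ∑ r ∈ Finset.Ico (s n) n, α (r + 1) ≤
      (2 / Real.log (Real.log (n : ℝ))) * Real.log (4 * q) := by
    have hstep1 : ∑ r ∈ Finset.Ico (s n) n, α (r + 1) ≤
        (1 / Real.log (Real.log (s n : ℝ))) *
          ∑ r ∈ Finset.Ico (s n) n, 1 / (((r : ℝ) + 1) * Real.log ((r : ℝ) + 1)) := by
      rw [Finset.mul_sum]
      apply Finset.sum_le_sum
      intro r hr
      obtain ⟨hr1, hr2⟩ := Finset.mem_Ico.mp hr
      have hr3 : 3 ≤ r := le_trans hs3 hr1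
      have hr3' : (3:ℝ) ≤ (r : ℝ) := by exact_mod_cast hr3
      have hrm : (s n : ℝ) ≤ (r : ℝ) := by exact_mod_cast hr1
      rw [hα (r + 1) (by omega)]
      push_cast
      have hlr1 : 1 < Real.log ((r:ℝ) + 1) := one_lt_log_aux (by linarith)
      have hllr : Real.log (Real.log (s n : ℝ)) ≤ Real.log (Real.log ((r:ℝ) + 1)) := by
        apply Real.log_le_log (by linarith)
        apply Real.log_le_log (by linarith)
        linarith
      have hX : (0:ℝ) < ((r:ℝ) + 1) * Real.log ((r:ℝ) + 1) := by positivity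
      rw [one_div_mul_one_div]
      rw [mul_comm (Real.log (Real.log (s n : ℝ)))]
      apply one_div_le_one_div_of_le (by positivity)
      gcongr
    have hstep2 : ∑ r ∈ Finset.Ico (s n) n, 1 / (((r : ℝ) + 1) * Real.log ((r : ℝ) + 1)) ≤
        Real.log (Real.log (n : ℝ)) - Real.log (Real.log (s n : ℝ)) :=
      telescope_bound hs3 hsn
    have hstep2' : ∑ r ∈ Finset.Ico (s n) n, 1 / (((r : ℝ) + 1) * Real.log ((r : ℝ) + 1)) ≤
        Real.log (4 * q) := le_trans hstep2 (by linarith)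
    have hsum_nonneg : 0 ≤ ∑ r ∈ Finset.Ico (s n) n,
        1 / (((r : ℝ) + 1) * Real.log ((r : ℝ) + 1)) := by
      apply Finset.sum_nonneg
      intro r hr
      obtain ⟨hr1, hr2⟩ := Finset.mem_Ico.mp hr
      have hr3' : (3:ℝ) ≤ (r : ℝ) := by exact_mod_cast le_trans hs3 hr1
      have := one_lt_log_aux (show (3:ℝ) ≤ (r:ℝ)+1 by linarith)
      positivity
    calc ∑ r ∈ Finset.Ico (s n) n, α (r + 1)
        ≤ (1 / Real.log (Real.log (s n : ℝ))) *
            ∑ r ∈ Finset.Ico (s n) n, 1 / (((r : ℝ) + 1) * Real.log ((r : ℝ) + 1)) := hstep1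
      _ ≤ (2 / Real.log (Real.log (n : ℝ))) * Real.log (4 * q) := by
          apply mul_le_mul _ hstep2' hsum_nonneg (by positivity)
          rw [div_le_div_iff₀ hllogm (by positivity)]
          linarith
  -- combine
  have hcomb : α (n + 1) * ∑ r ∈ Finset.Ico (s n) n, α (r + 1) ≤
      (2 * Real.log (4 * q)) * g n := by
    have := mul_le_mul hα_le hinner hinner_nonneg
      (by positivity : (0:ℝ) ≤ 1 / ((n : ℝ) * Real.log (n : ℝ) * Real.log (Real.log (n : ℝ))))
    calc α (n + 1) * ∑ r ∈ Finset.Ico (s n) n, α (r + 1)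
        ≤ (1 / ((n : ℝ) * Real.log (n : ℝ) * Real.log (Real.log (n : ℝ)))) *
            ((2 / Real.log (Real.log (n : ℝ))) * Real.log (4 * q)) := this
      _ = (2 * Real.log (4 * q)) * g n := by
          simp only [hgdef]
          field_simp
  have hterm_nonneg : 0 ≤ α (n + 1) * ∑ r ∈ Finset.Ico (s n) n, α (r + 1) :=
    mul_nonneg (le_of_lt hα_pos) hinner_nonneg
  have hg_nonneg : 0 ≤ g n := by
    simp only [hgdef]
    have h1' : (0:ℝ) ≤ (n : ℝ) := by linarith
    have h2' : (0:ℝ) ≤ Real.log (n : ℝ) := by linarith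
    positivity
  rw [Real.norm_eq_abs, Real.norm_eq_abs, abs_of_nonneg hterm_nonneg, abs_of_nonneg hg_nonneg]
  exact hcomb

end
end
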